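/- arXiv:2402.14493 — 9 statements merged into one kernel-verified Lean document; each statement's English description precedes it below -/
import Mathlib

section
/- Let w be a positive integer and let R, P, Q be finite multi-sets of integers from [1, w]. Suppose that the set of subset sums S(P) contains an arithmetic progression (a_1, …, a_k) with common difference Δ ≥ 1, and that S(R) mod Δ = [0, Δ−1], i.e., every residue modulo Δ is realized by some subset sum of R. If k ≥ σ(R) + w + 1, then every integer in the interval [σ(R) + a_k, σ(Q)] belongs to S(R ∪ P ∪ Q). -/
/-- The set of all subset sums of a multiset of natural numbers. -/
def subsetSums (Z : Multiset ℕ) : Set ℕ := {s | ∃ Y ≤ Z, Y.sum = s}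

lemma greedy (w : ℕ) : ∀ (Q : Multiset ℕ), (∀ x ∈ Q, x ≤ w) →
    ∀ T, T ≤ Q.sum → ∃ Y, Y ≤ Q ∧ Y.sum ≤ T ∧ T ≤ Y.sum + w := by
  intro Q
  induction Q using Multiset.induction with
  | empty =>
    intro _ T hT
    simp only [Multiset.sum_zero, Nat.le_zero] at hT
    exact ⟨0, le_refl _, by rw [Multiset.sum_zero]; omega, by rw [Multiset.sum_zero]; omega⟩
  | cons z Q ih =>
    intro hmem T hT
    rw [Multiset.sum_cons] at hT
    by_cases h : z ≤ T
    · obtain ⟨Y, hY, h1, h2⟩ := ih (fun x hx => hmem x (Multiset.mem_cons_of_mem hx))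
        (T - z) (by omega)
      refine ⟨z ::ₘ Y, Multiset.cons_le_cons z hY, ?_, ?_⟩ <;>
        simp only [Multiset.sum_cons] <;> omega
    · have hz : z ≤ w := hmem z (Multiset.mem_cons_self z Q)
      exact ⟨0, Multiset.zero_le _, by rw [Multiset.sum_zero]; omega, by rw [Multiset.sum_zero]; omega⟩

lemma sum_le_of_le {X R : Multiset ℕ} (h : X ≤ R) : X.sum ≤ R.sum := by
  obtain ⟨u, rfl⟩ := Multiset.le_iff_exists_add.mp h
  simp

lemma cover (R P : Multiset ℕ) (a Δ k : ℕ) (hΔ : 1 ≤ Δ)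
    (hAP : ∀ j < k, a + j * Δ ∈ subsetSums P)
    (hmod : (fun s => s % Δ) '' subsetSums R = Set.Iio Δ) (hk : 1 ≤ k)
    (n : ℕ) (h1 : R.sum + a ≤ n) (h2 : n ≤ a + (k - 1) * Δ) :
    n ∈ subsetSums (R + P) := by
  have hρ : (n - a) % Δ ∈ Set.Iio Δ := Set.mem_Iio.mpr (Nat.mod_lt _ hΔ)
  rw [← hmod] at hρ
  obtain ⟨s, hs, hsmod⟩ := hρ
  obtain ⟨X, hXR, hXsum⟩ := hs
  have hsle : s ≤ R.sum := hXsum ▸ sum_le_of_le hXR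
  have hsa : s + a ≤ n := by omega
  set d := n - a - s with hd
  have hmodeq : d % Δ = 0 := by
    have : (n - a) % Δ = s % Δ := hsmod.symm
    have hsub : (n - a - s) % Δ = 0 := Nat.sub_mod_eq_zero_of_mod_eq this
    exact hsub
  have hdvd : Δ ∣ d := Nat.dvd_of_mod_eq_zero hmodeq
  obtain ⟨j, hj⟩ := hdvd
  have hdle : d ≤ (k - 1) * Δ := by omega
  have hjk : j < k := by
    have h4 : Δ * j ≤ Δ * (k - 1) := by
      rw [← hj, mul_comm Δ (k - 1)]; exact hdle
    have h5 : j ≤ k - 1 := Nat.le_of_mul_le_mul_left h4 (by omega)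
    omega
  obtain ⟨Z, hZP, hZsum⟩ := hAP j hjk
  refine ⟨X + Z, add_le_add hXR hZP, ?_⟩
  rw [Multiset.sum_add, hXsum, hZsum]
  have : j * Δ = d := by rw [hj]; ring
  omega

/-- Let `w ≥ 1` and let `R, P, Q` be multisets of integers from `[1, w]`.
Suppose `S(P)` contains an arithmetic progression `a, a + Δ, …, a + (k-1)Δ` with common
difference `Δ ≥ 1`, and every residue modulo `Δ` is realized by some subset sum of `R`.
If `k ≥ σ(R) + w + 1`, then every integer in `[σ(R) + aₖ, σ(Q)]` belongs to
`S(R ∪ P ∪ Q)`. -/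
theorem stmt0 (w : ℕ) (hw : 1 ≤ w) (R P Q : Multiset ℕ)
    (hR : ∀ x ∈ R, x ∈ Finset.Icc 1 w) (hP : ∀ x ∈ P, x ∈ Finset.Icc 1 w)
    (hQ : ∀ x ∈ Q, x ∈ Finset.Icc 1 w)
    (a Δ k : ℕ) (hΔ : 1 ≤ Δ)
    (hAP : ∀ j < k, a + j * Δ ∈ subsetSums P)
    (hmod : (fun s => s % Δ) '' subsetSums R = Set.Iio Δ)
    (hk : R.sum + w + 1 ≤ k) :
    ∀ y : ℕ, R.sum + (a + (k - 1) * Δ) ≤ y → y ≤ Q.sum →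
      y ∈ subsetSums (R + P + Q) := by
  intro y hy1 hy2
  have hkΔ : k - 1 ≤ (k - 1) * Δ := Nat.le_mul_of_pos_right _ hΔ
  obtain ⟨Y, hYQ, hYle, hYge⟩ := greedy w Q
    (fun x hx => (Finset.mem_Icc.mp (hQ x hx)).2)
    (y - (R.sum + a)) (by omega)
  have hcov : y - Y.sum ∈ subsetSums (R + P) := by
    refine cover R P a Δ k hΔ hAP hmod (by omega) _ (by omega) (by omega)
  obtain ⟨X, hX, hXsum⟩ := hcov
  refine ⟨X + Y, add_le_add hX hYQ, ?_⟩
  rw [Multiset.sum_add, hXsum]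
  omega
end

section
/- Let u ≥ 2 and ℓ ≥ 1 be integers, let c ≥ 1, ρ ≥ 1, and u' ≥ u be reals, and let A_1, …, A_ℓ be nonempty subsets of [1, u]. If Σ_{i=1}^ℓ |A_i| ≥ ℓ + 4cρu'·log u', then there exists an integer k with 2 ≤ k ≤ u such that at least 2cρu'/k of the sets A_1, …, A_ℓ have size at least k. -/
/-!
Write `N k` for the number of sets of size at least `k`. Counting the pairs `(i, k)` with
`2 ≤ k ≤ |A i|` gives `Σ |A i| ≤ ℓ + Σ_{k=2}^{u} N k`. If every `N k` were below `C / k`, with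
`C = 2cρu'`, the right-hand side would be below `ℓ + C (H_u - 1) ≤ ℓ + C ln u`, which is at most
`ℓ + 4cρu' log₂ u'`.
-/

open Finset

theorem sum_Icc_two_inv_le_log (n : ℕ) : ∑ k ∈ Icc 2 n, (k : ℝ)⁻¹ ≤ Real.log n := by
  rcases Nat.eq_zero_or_pos n with rfl | hn
  · simp
  have h := harmonic_le_one_add_log n
  rw [harmonic_eq_sum_Icc, ← insert_Icc_add_one_left_eq_Icc hn, sum_insert (by simp)] at h
  push_cast at h
  linarith

theorem Real.log_le_logb_two {x : ℝ} (hx : 1 ≤ x) : Real.log x ≤ Real.logb 2 x := by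
  rw [Real.logb, le_div_iff₀ (Real.log_pos one_lt_two)]
  exact mul_le_of_le_one_right (Real.log_nonneg hx) (Real.log_two_lt_d9.le.trans (by norm_num))

theorem le_one_add_card_filter_Icc_two {n u : ℕ} (hn : n ≤ u) :
    n ≤ 1 + #{k ∈ Icc 2 u | k ≤ n} := by
  have : {k ∈ Icc 2 u | k ≤ n} = Icc 2 n := by
    ext k
    simp only [mem_filter, mem_Icc]
    omega
  rw [this, Nat.card_Icc]
  omega

theorem sum_le_card_add_sum_card_filter_le {ι : Type*} (s : Finset ι) (f : ι → ℕ) {u : ℕ}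
    (hf : ∀ i ∈ s, f i ≤ u) :
    ∑ i ∈ s, f i ≤ #s + ∑ k ∈ Icc 2 u, #{i ∈ s | k ≤ f i} :=
  calc ∑ i ∈ s, f i ≤ ∑ i ∈ s, (1 + #{k ∈ Icc 2 u | k ≤ f i}) :=
        sum_le_sum fun i hi => le_one_add_card_filter_Icc_two (hf i hi)
    _ = #s + ∑ k ∈ Icc 2 u, #{i ∈ s | k ≤ f i} := by
        rw [sum_add_distrib, card_eq_sum_ones s]
        exact congrArg _ (sum_card_bipartiteAbove_eq_sum_card_bipartiteBelow fun i k => k ≤ f i)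

theorem exists_div_le_of_mul_log_le_sum {u : ℕ} (hu : 2 ≤ u) (N : ℕ → ℕ) (C : ℝ)
    (hN : C * Real.log u ≤ ∑ k ∈ Icc 2 u, (N k : ℝ)) :
    ∃ k ∈ Icc 2 u, C / k ≤ N k := by
  by_contra! h
  have h2 : 2 ∈ Icc 2 u := mem_Icc.mpr ⟨le_rfl, hu⟩
  have hC : 0 ≤ C := by
    have : (0 : ℝ) < C / 2 := (Nat.cast_nonneg _).trans_lt (h 2 h2)
    linarith
  have := calc ∑ k ∈ Icc 2 u, (N k : ℝ)
      _ < ∑ k ∈ Icc 2 u, C / k := sum_lt_sum_of_nonempty ⟨2, h2⟩ h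
      _ = C * ∑ k ∈ Icc 2 u, (k : ℝ)⁻¹ := by simp only [mul_sum, div_eq_mul_inv]
      _ ≤ C * Real.log u := by gcongr; exact sum_Icc_two_inv_le_log u
  linarith

theorem stmt5_general (u ℓ : ℕ) (hu : 2 ≤ u) (c ρ u' : ℝ)
    (hc : 1 ≤ c) (hρ : 1 ≤ ρ) (hu' : (u : ℝ) ≤ u')
    (A : Fin ℓ → Finset ℕ)
    (hsub : ∀ i, A i ⊆ Finset.Icc 1 u)
    (hsum : (ℓ : ℝ) + 4 * c * ρ * u' * Real.logb 2 u' ≤ ∑ i, ((A i).card : ℝ)) :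
    ∃ k : ℕ, 2 ≤ k ∧ k ≤ u ∧
      2 * c * ρ * u' / k ≤ ((Finset.univ.filter fun i => k ≤ (A i).card).card : ℝ) := by
  have hcount : ∑ i, ((A i).card : ℝ) ≤ ℓ + ∑ k ∈ Icc 2 u, (#{i | k ≤ (A i).card} : ℝ) := by
    have := sum_le_card_add_sum_card_filter_le univ (fun i => (A i).card)
      fun i _ => by simpa using card_le_card (hsub i)
    exact_mod_cast card_fin ℓ ▸ this
  have hu1 : (1 : ℝ) ≤ u := by exact_mod_cast one_le_two.trans hu
  have hlog : Real.log u ≤ Real.logb 2 u' :=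
    (Real.log_le_log (by positivity) hu').trans (Real.log_le_logb_two (hu1.trans hu'))
  have hlogb : 0 ≤ Real.logb 2 u' := (Real.log_nonneg hu1).trans hlog
  have hC : 0 ≤ 2 * c * ρ * u' := by have := hu1.trans hu'; positivity
  obtain ⟨k, hk, hle⟩ := exists_div_le_of_mul_log_le_sum hu (fun k => #{i | k ≤ (A i).card})
    (2 * c * ρ * u') <| calc
      2 * c * ρ * u' * Real.log u ≤ 2 * c * ρ * u' * (2 * Real.logb 2 u') := by
        gcongr
        linarith
      _ ≤ _ := by linarith
  exact ⟨k, (mem_Icc.1 hk).1, (mem_Icc.1 hk).2, hle⟩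

/-- Let `u ≥ 2`, `ℓ ≥ 1` be integers, `c, ρ ≥ 1` and `u' ≥ u` reals,
and let `A 1, …, A ℓ` be nonempty subsets of `[1, u]`. If
`Σ |A i| ≥ ℓ + 4cρu' log u'`, then for some integer `k` with `2 ≤ k ≤ u`, at least
`2cρu'/k` of the sets `A i` have size at least `k`. -/
theorem stmt5 (u ℓ : ℕ) (hu : 2 ≤ u) (hℓ : 1 ≤ ℓ) (c ρ u' : ℝ)
    (hc : 1 ≤ c) (hρ : 1 ≤ ρ) (hu' : (u : ℝ) ≤ u')
    (A : Fin ℓ → Finset ℕ) (hA : ∀ i, (A i).Nonempty)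
    (hsub : ∀ i, A i ⊆ Finset.Icc 1 u)
    (hsum : (ℓ : ℝ) + 4 * c * ρ * u' * Real.logb 2 u' ≤ ∑ i, ((A i).card : ℝ)) :
    ∃ k : ℕ, 2 ≤ k ∧ k ≤ u ∧
      2 * c * ρ * u' / k ≤ ((Finset.univ.filter fun i => k ≤ (A i).card).card : ℝ) :=
  stmt5_general u ℓ hu c ρ u' hc hρ hu' A hsub hsum
end

section
/- Let A = {a_1, …, a_k} be a multi-set of k nonnegative integers with max(A) > 0, let 0 ≤ s ≤ k, and let B be a multi-set of s integers sampled uniformly at random from A without replacement. Then for every real η > 0, Pr[ |σ(B) − (s/k)·σ(A)| ≥ η ] ≤ 2·exp( −min{ η²/(4·σ(A)·max(A)), η/(2·max(A)) } ). -/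
open Finset

-- (4) e^x ≤ 1 + x + x² for |x| ≤ 1
lemma my_exp_quad {x : ℝ} (hx : |x| ≤ 1) : Real.exp x ≤ 1 + x + x ^ 2 := by
  have h := Real.exp_bound hx (n := 3) (by norm_num)
  have h2 : Real.exp x - ∑ m ∈ range 3, x ^ m / m.factorial ≤ |x| ^ 3 * (4 / (6 * 3)) := by
    have := (abs_le.1 h).2
    simpa [Nat.factorial] using this
  have hsum : ∑ m ∈ range 3, x ^ m / m.factorial = 1 + x + x ^ 2 / 2 := by
    rw [Finset.sum_range_succ, Finset.sum_range_succ, Finset.sum_range_one]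
    norm_num [Nat.factorial]
  have habs : |x| ^ 3 ≤ x ^ 2 := by
    have : |x| ^ 3 ≤ |x| ^ 2 := pow_le_pow_of_le_one (abs_nonneg x) hx (by norm_num)
    simpa [sq_abs] using this
  nlinarith [sq_nonneg x]

-- (2) nat inequality
lemma my_choose_ineq {k s : ℕ} (hs : s ≤ k) : ∀ u, u ≤ s →
    Nat.choose (k - u) (s - u) * k ^ u ≤ Nat.choose k s * s ^ u := by
  intro u
  induction u with
  | zero => simp
  | succ n ih =>
    intro hn
    have hns : n ≤ s := by omega
    have ihn := ih hns
    have hkn : 0 < k - n := by omega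
    have key : (k - n) * Nat.choose (k - n - 1) (s - n - 1) =
        Nat.choose (k - n) (s - n) * (s - n) := by
      have h1 : k - n - 1 + 1 = k - n := by omega
      have h2 : s - n - 1 + 1 = s - n := by omega
      have h := Nat.add_one_mul_choose_eq (k - n - 1) (s - n - 1)
      rw [h1, h2] at h
      exact h
    have e1 : k - (n + 1) = k - n - 1 := by omega
    have e2 : s - (n + 1) = s - n - 1 := by omega
    rw [e1, e2]
    refine Nat.le_of_mul_le_mul_left ?_ hkn
    calc (k - n) * (Nat.choose (k - n - 1) (s - n - 1) * k ^ (n + 1))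
        = ((k - n) * Nat.choose (k - n - 1) (s - n - 1)) * k ^ (n + 1) := by ring
      _ = Nat.choose (k - n) (s - n) * (s - n) * k ^ (n + 1) := by rw [key]
      _ = (Nat.choose (k - n) (s - n) * k ^ n) * ((s - n) * k) := by ring
      _ ≤ (Nat.choose k s * s ^ n) * ((k - n) * s) := by
          have h3 : (s - n) * k ≤ (k - n) * s := by
            have h4 : n * s ≤ n * k := Nat.mul_le_mul_left n hs
            rw [Nat.sub_mul, Nat.sub_mul]
            have h5 : s * k = k * s := Nat.mul_comm s k
            have h6 : n * s ≤ n * k := h4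
            omega
          exact Nat.mul_le_mul ihn h3
      _ = (k - n) * (Nat.choose k s * s ^ (n + 1)) := by ring
-- (1) counting supersets
lemma my_card_superset {k s : ℕ} (U : Finset (Fin k)) (hU : U.card ≤ s) :
    ((Finset.powersetCard s (Finset.univ : Finset (Fin k))).filter fun T => U ⊆ T).card
      = Nat.choose (k - U.card) (s - U.card) := by
  classical
  have : ((Finset.powersetCard s (Finset.univ : Finset (Fin k))).filter fun T => U ⊆ T).card
      = (Finset.powersetCard (s - U.card) Uᶜ).card := by
    apply Finset.card_bij' (fun T _ => T \ U) (fun T' _ => T' ∪ U)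
    · intro T hT
      simp only [mem_filter, mem_powersetCard] at hT
      obtain ⟨⟨-, hcard⟩, hsub⟩ := hT
      simp only [mem_powersetCard]
      constructor
      · intro x hx
        simp only [mem_sdiff] at hx
        simp [Finset.mem_compl, hx.2]
      · rw [card_sdiff_of_subset hsub, hcard]
    · intro T' hT'
      simp only [mem_powersetCard] at hT'
      obtain ⟨hsub, hcard⟩ := hT'
      have hdisj : Disjoint T' U := by
        rw [Finset.disjoint_left]
        intro x hx
        have := hsub hx
        simpa [Finset.mem_compl] using this
      simp only [mem_filter, mem_powersetCard]
      refine ⟨⟨subset_univ _, ?_⟩, subset_union_right⟩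
      rw [card_union_of_disjoint hdisj, hcard]
      omega
    · intro T hT
      simp only [mem_filter, mem_powersetCard] at hT
      exact sdiff_union_of_subset hT.2
    · intro T' hT'
      simp only [mem_powersetCard] at hT'
      have hdisj : Disjoint T' U := by
        rw [Finset.disjoint_left]
        intro x hx
        have := hT'.1 hx
        simpa [Finset.mem_compl] using this
      exact union_sdiff_cancel_right hdisj
  rw [this, Finset.card_powersetCard, card_compl, Fintype.card_fin]

lemma my_card_superset_empty {k s : ℕ} (U : Finset (Fin k)) (hU : s < U.card) :
    ((Finset.powersetCard s (Finset.univ : Finset (Fin k))).filter fun T => U ⊆ T) = ∅ := by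
  rw [Finset.filter_eq_empty_iff]
  intro T hT hsub
  rw [Finset.mem_powersetCard] at hT
  have := Finset.card_le_card hsub
  omega
-- (3) key expansion bound, nonnegative case
lemma my_lemA {k s : ℕ} (hk : 0 < k) (hs : s ≤ k) (c : Fin k → ℝ) (hc : ∀ i, 0 ≤ c i) :
    ∑ T ∈ Finset.powersetCard s (Finset.univ : Finset (Fin k)), ∏ i ∈ T, (1 + c i)
      ≤ (Nat.choose k s : ℝ) * ∏ i, (1 + (s / k : ℝ) * c i) := by
  classical
  have expand : ∀ T : Finset (Fin k), ∏ i ∈ T, (1 + c i) = ∑ U ∈ T.powerset, ∏ i ∈ U, c i := by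
    intro T
    have h := Finset.prod_add c (fun _ => (1:ℝ)) T
    simp only [Finset.prod_const_one, mul_one] at h
    rw [← h]
    exact Finset.prod_congr rfl fun i _ => add_comm 1 (c i)
  have expand2 : ∀ T : Finset (Fin k), T.card = s →
      ∏ i ∈ T, (1 + c i)
        = ∑ U ∈ (Finset.univ : Finset (Fin k)).powerset,
            if U ⊆ T then ∏ i ∈ U, c i else 0 := by
    intro T hT
    rw [expand T, ← Finset.sum_filter]
    congr 1
    ext U
    simp [Finset.mem_powerset]
  have lhs_eq : ∑ T ∈ Finset.powersetCard s (Finset.univ : Finset (Fin k)), ∏ i ∈ T, (1 + c i)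
      = ∑ U ∈ (Finset.univ : Finset (Fin k)).powerset,
          (((Finset.powersetCard s (Finset.univ : Finset (Fin k))).filter
            fun T => U ⊆ T).card : ℝ) * ∏ i ∈ U, c i := by
    rw [Finset.sum_congr rfl fun T hT =>
      expand2 T (Finset.mem_powersetCard.1 hT).2]
    rw [Finset.sum_comm]
    refine Finset.sum_congr rfl fun U _ => ?_
    rw [← Finset.sum_filter, Finset.sum_const, nsmul_eq_mul]
  have rhs_eq : ∏ i, (1 + (s / k : ℝ) * c i)
      = ∑ U ∈ (Finset.univ : Finset (Fin k)).powerset,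
          ((s / k : ℝ)) ^ U.card * ∏ i ∈ U, c i := by
    have h := Finset.prod_add (fun i => (s / k : ℝ) * c i) (fun _ => (1:ℝ))
      (Finset.univ : Finset (Fin k))
    simp only [Finset.prod_const_one, mul_one] at h
    rw [show (∏ i, (1 + (s / k : ℝ) * c i))
        = ∏ i, ((s / k : ℝ) * c i + 1) from
      Finset.prod_congr rfl fun i _ => add_comm 1 _, h]
    refine Finset.sum_congr rfl fun U _ => ?_
    rw [Finset.prod_mul_distrib, Finset.prod_const]
  rw [lhs_eq, rhs_eq, Finset.mul_sum]
  refine Finset.sum_le_sum fun U _ => ?_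
  have hprod : 0 ≤ ∏ i ∈ U, c i := Finset.prod_nonneg fun i _ => hc i
  rw [← mul_assoc]
  by_cases hu : U.card ≤ s
  · refine mul_le_mul_of_nonneg_right ?_ hprod
    rw [my_card_superset U hu]
    have hnat := my_choose_ineq hs U.card hu
    have hkpow : (0:ℝ) < (k:ℝ) ^ U.card := by positivity
    rw [div_pow, ← mul_div_assoc, le_div_iff₀ hkpow]
    exact_mod_cast hnat
  · rw [my_card_superset_empty U (by omega)]
    simp only [Finset.card_empty, Nat.cast_zero, zero_mul]
    positivity
lemma my_lemA' {k s : ℕ} (hk : 0 < k) (hs : s ≤ k) (c : Fin k → ℝ)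
    (hc1 : ∀ i, -1 < c i) (hc0 : ∀ i, c i ≤ 0) :
    ∑ T ∈ Finset.powersetCard s (Finset.univ : Finset (Fin k)), ∏ i ∈ T, (1 + c i)
      ≤ (Nat.choose k s : ℝ) * ∏ i, (1 + (s / k : ℝ) * c i) := by
  classical
  have hpos : ∀ i, (0:ℝ) < 1 + c i := fun i => by linarith [hc1 i]
  set d : Fin k → ℝ := fun i => (1 + c i)⁻¹ - 1 with hd_def
  have hd : ∀ i, 0 ≤ d i := by
    intro i
    have h1 : (1:ℝ) ≤ (1 + c i)⁻¹ := (one_le_inv₀ (hpos i)).2 (by linarith [hc0 i])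
    simp only [hd_def]
    linarith
  have hinv : ∀ i, 1 + d i = (1 + c i)⁻¹ := fun i => by simp [hd_def]
  -- step 1 : per-T factorization
  have step1 : ∀ T : Finset (Fin k),
      ∏ i ∈ T, (1 + c i) = (∏ i, (1 + c i)) * ∏ i ∈ Tᶜ, (1 + d i) := by
    intro T
    have hsplit : (∏ i ∈ Tᶜ, (1 + c i)) * (∏ i ∈ T, (1 + c i)) = ∏ i, (1 + c i) := by
      rw [← Finset.prod_sdiff (Finset.subset_univ T), Finset.compl_eq_univ_sdiff]
    have hprodinv : ∏ i ∈ Tᶜ, (1 + d i) = (∏ i ∈ Tᶜ, (1 + c i))⁻¹ := by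
      rw [← Finset.prod_inv_distrib]
      exact Finset.prod_congr rfl fun i _ => hinv i
    have hne : (∏ i ∈ Tᶜ, (1 + c i)) ≠ 0 :=
      ne_of_gt (Finset.prod_pos fun i _ => hpos i)
    rw [hprodinv, ← hsplit]
    field_simp
  -- step 2 : reindex by complement
  have step2 : ∑ T ∈ Finset.powersetCard s (Finset.univ : Finset (Fin k)),
      ∏ i ∈ Tᶜ, (1 + d i)
      = ∑ T' ∈ Finset.powersetCard (k - s) (Finset.univ : Finset (Fin k)),
          ∏ i ∈ T', (1 + d i) := by
    apply Finset.sum_nbij' (fun T => Tᶜ) (fun T => Tᶜ)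
    · intro T hT
      rw [Finset.mem_powersetCard] at hT ⊢
      refine ⟨Finset.subset_univ _, ?_⟩
      rw [Finset.card_compl, Fintype.card_fin, hT.2]
    · intro T hT
      rw [Finset.mem_powersetCard] at hT ⊢
      refine ⟨Finset.subset_univ _, ?_⟩
      rw [Finset.card_compl, Fintype.card_fin, hT.2]
      omega
    · intro T _; exact compl_compl T
    · intro T _; exact compl_compl T
    · intro T _; rfl
  have hPpos : (0:ℝ) < ∏ i, (1 + c i) := Finset.prod_pos fun i _ => hpos i
  have happly := my_lemA hk (Nat.sub_le k s) d hd
  calc ∑ T ∈ Finset.powersetCard s (Finset.univ : Finset (Fin k)), ∏ i ∈ T, (1 + c i)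
      = (∏ i, (1 + c i)) * ∑ T ∈ Finset.powersetCard s (Finset.univ : Finset (Fin k)),
          ∏ i ∈ Tᶜ, (1 + d i) := by
        rw [Finset.mul_sum]
        exact Finset.sum_congr rfl fun T _ => step1 T
    _ = (∏ i, (1 + c i)) * ∑ T' ∈ Finset.powersetCard (k - s) (Finset.univ : Finset (Fin k)),
          ∏ i ∈ T', (1 + d i) := by rw [step2]
    _ ≤ (∏ i, (1 + c i)) * ((Nat.choose k (k - s) : ℝ) * ∏ i, (1 + ((k - s : ℕ) / k : ℝ) * d i)) :=
        mul_le_mul_of_nonneg_left happly (le_of_lt hPpos)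
    _ = (Nat.choose k s : ℝ) * ∏ i, (1 + (s / k : ℝ) * c i) := by
        rw [Nat.choose_symm hs]
        rw [mul_left_comm, ← Finset.prod_mul_distrib]
        congr 1
        refine Finset.prod_congr rfl fun i _ => ?_
        have hne : (1 + c i) ≠ 0 := ne_of_gt (hpos i)
        have hkne : (k:ℝ) ≠ 0 := Nat.cast_ne_zero.2 hk.ne'
        have hcast : ((k - s : ℕ) : ℝ) = (k : ℝ) - s := by
          rw [Nat.cast_sub hs]
        simp only [hd_def, hcast]
        field_simp
        ring
-- (5) MGF bound
lemma my_mgf {k s : ℕ} (hk : 0 < k) (hs : s ≤ k) (a : Fin k → ℕ) {M : ℝ}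
    (hM : ∀ i, (a i : ℝ) ≤ M) {lam : ℝ} (hlam : |lam| * M ≤ 1) :
    ∑ T ∈ Finset.powersetCard s (Finset.univ : Finset (Fin k)),
        Real.exp (lam * ∑ i ∈ T, (a i : ℝ))
      ≤ (Nat.choose k s : ℝ) *
        Real.exp (lam * ((s / k : ℝ) * ∑ i, (a i : ℝ)) + lam ^ 2 * (∑ i, (a i : ℝ)) * M) := by
  classical
  set p : ℝ := (s / k : ℝ) with hp_def
  have hp0 : 0 ≤ p := by positivity
  have hp1 : p ≤ 1 := by
    rw [hp_def, div_le_one (by exact_mod_cast hk)]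
    exact_mod_cast hs
  set c : Fin k → ℝ := fun i => Real.exp (lam * a i) - 1 with hc_def
  have hc1 : ∀ i, -1 < c i := fun i => by
    simp only [hc_def]; have := Real.exp_pos (lam * a i); linarith
  have e1 : ∀ T : Finset (Fin k),
      Real.exp (lam * ∑ i ∈ T, (a i : ℝ)) = ∏ i ∈ T, (1 + c i) := by
    intro T
    rw [Finset.mul_sum, Real.exp_sum]
    exact Finset.prod_congr rfl fun i _ => by simp [hc_def]
  have key : ∑ T ∈ Finset.powersetCard s (Finset.univ : Finset (Fin k)), ∏ i ∈ T, (1 + c i)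
      ≤ (Nat.choose k s : ℝ) * ∏ i, (1 + p * c i) := by
    rcases le_or_gt 0 lam with hl | hl
    · refine my_lemA hk hs c fun i => ?_
      simp only [hc_def, sub_nonneg]
      rw [← Real.exp_zero]
      exact Real.exp_le_exp.2 (by positivity)
    · refine my_lemA' hk hs c hc1 fun i => ?_
      simp only [hc_def, sub_nonpos]
      rw [← Real.exp_zero]
      refine Real.exp_le_exp.2 ?_
      have : (0:ℝ) ≤ (a i : ℝ) := Nat.cast_nonneg _
      nlinarith
  have hfac : ∀ i, (0:ℝ) ≤ 1 + p * c i := by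
    intro i
    have h1 : 1 + p * c i = (1 - p) + p * Real.exp (lam * a i) := by
      simp only [hc_def]; ring
    rw [h1]
    have := Real.exp_pos (lam * a i)
    nlinarith
  have prodbound : ∏ i, (1 + p * c i)
      ≤ Real.exp (lam * (p * ∑ i, (a i : ℝ)) + lam ^ 2 * (∑ i, (a i : ℝ)) * M) := by
    calc ∏ i, (1 + p * c i) ≤ ∏ i, Real.exp (p * c i) :=
          Finset.prod_le_prod (fun i _ => hfac i)
            (fun i _ => by linarith [Real.add_one_le_exp (p * c i)])
      _ = Real.exp (∑ i, p * c i) := (Real.exp_sum _ _).symm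
      _ ≤ Real.exp (lam * (p * ∑ i, (a i : ℝ)) + lam ^ 2 * (∑ i, (a i : ℝ)) * M) := by
          refine Real.exp_le_exp.2 ?_
          have hterm : ∀ i, p * c i ≤ p * (lam * a i) + lam ^ 2 * (a i : ℝ) * M := by
            intro i
            have ha0 : (0:ℝ) ≤ (a i : ℝ) := Nat.cast_nonneg _
            have habs : |lam * a i| ≤ 1 := by
              rw [abs_mul, abs_of_nonneg ha0]
              calc |lam| * (a i : ℝ) ≤ |lam| * M := by
                    exact mul_le_mul_of_nonneg_left (hM i) (abs_nonneg lam)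
                _ ≤ 1 := hlam
            have hq := my_exp_quad habs
            have hc_le : c i ≤ lam * a i + (lam * a i) ^ 2 := by
              simp only [hc_def]; linarith
            have hsq : (lam * a i) ^ 2 ≤ lam ^ 2 * (a i : ℝ) * M := by
              have h2 : (lam * a i) ^ 2 = lam ^ 2 * (a i : ℝ) * (a i : ℝ) := by ring
              rw [h2]
              have : (0:ℝ) ≤ lam ^ 2 * (a i : ℝ) := by positivity
              exact mul_le_mul_of_nonneg_left (hM i) this
            nlinarith [sq_nonneg lam, mul_nonneg (sq_nonneg lam) ha0]
          calc ∑ i, p * c i ≤ ∑ i, (p * (lam * a i) + lam ^ 2 * (a i : ℝ) * M) :=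
                Finset.sum_le_sum fun i _ => hterm i
            _ = lam * (p * ∑ i, (a i : ℝ)) + lam ^ 2 * (∑ i, (a i : ℝ)) * M := by
                rw [Finset.sum_add_distrib, ← Finset.mul_sum, ← Finset.sum_mul, ← Finset.mul_sum,
                  ← Finset.mul_sum]
                ring
  calc ∑ T ∈ Finset.powersetCard s (Finset.univ : Finset (Fin k)),
        Real.exp (lam * ∑ i ∈ T, (a i : ℝ))
      = ∑ T ∈ Finset.powersetCard s (Finset.univ : Finset (Fin k)), ∏ i ∈ T, (1 + c i) :=
        Finset.sum_congr rfl fun T _ => e1 T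
    _ ≤ (Nat.choose k s : ℝ) * ∏ i, (1 + p * c i) := key
    _ ≤ (Nat.choose k s : ℝ) *
        Real.exp (lam * (p * ∑ i, (a i : ℝ)) + lam ^ 2 * (∑ i, (a i : ℝ)) * M) :=
        mul_le_mul_of_nonneg_left prodbound (Nat.cast_nonneg _)
-- (6) one-sided tail bound
lemma my_tail {k s : ℕ} (hk : 0 < k) (hs : s ≤ k) (a : Fin k → ℕ) {M : ℝ}
    (hM : ∀ i, (a i : ℝ) ≤ M) {lam : ℝ} (hlam : |lam| * M ≤ 1) (t : ℝ) :
    (((Finset.powersetCard s (Finset.univ : Finset (Fin k))).filter fun T =>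
        t ≤ lam * (∑ i ∈ T, (a i : ℝ)) - lam * ((s / k : ℝ) * ∑ i, (a i : ℝ))).card : ℝ)
      ≤ (Nat.choose k s : ℝ) * Real.exp (lam ^ 2 * (∑ i, (a i : ℝ)) * M - t) := by
  classical
  set S : ℝ := ∑ i, (a i : ℝ) with hS_def
  set G := (Finset.powersetCard s (Finset.univ : Finset (Fin k))).filter fun T =>
      t ≤ lam * (∑ i ∈ T, (a i : ℝ)) - lam * ((s / k : ℝ) * S) with hG_def
  have step1 : (G.card : ℝ) * Real.exp t
      ≤ ∑ T ∈ G, Real.exp (lam * (∑ i ∈ T, (a i : ℝ)) - lam * ((s / k : ℝ) * S)) := by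
    rw [← nsmul_eq_mul]
    refine Finset.card_nsmul_le_sum G _ _ fun T hT => ?_
    exact Real.exp_le_exp.2 (Finset.mem_filter.1 hT).2
  have step2 : ∑ T ∈ G, Real.exp (lam * (∑ i ∈ T, (a i : ℝ)) - lam * ((s / k : ℝ) * S))
      ≤ ∑ T ∈ Finset.powersetCard s (Finset.univ : Finset (Fin k)),
          Real.exp (lam * (∑ i ∈ T, (a i : ℝ)) - lam * ((s / k : ℝ) * S)) :=
    Finset.sum_le_sum_of_subset_of_nonneg (Finset.filter_subset _ _)
      fun T _ _ => (Real.exp_pos _).le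
  have step3 : ∑ T ∈ Finset.powersetCard s (Finset.univ : Finset (Fin k)),
      Real.exp (lam * (∑ i ∈ T, (a i : ℝ)) - lam * ((s / k : ℝ) * S))
      = (∑ T ∈ Finset.powersetCard s (Finset.univ : Finset (Fin k)),
          Real.exp (lam * (∑ i ∈ T, (a i : ℝ)))) * Real.exp (-(lam * ((s / k : ℝ) * S))) := by
    rw [Finset.sum_mul]
    exact Finset.sum_congr rfl fun T _ => by rw [← Real.exp_add]; ring_nf
  have step4 := my_mgf hk hs a hM hlam
  have step5 : (∑ T ∈ Finset.powersetCard s (Finset.univ : Finset (Fin k)),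
        Real.exp (lam * ∑ i ∈ T, (a i : ℝ))) * Real.exp (-(lam * ((s / k : ℝ) * S)))
      ≤ ((Nat.choose k s : ℝ) * Real.exp (lam * ((s / k : ℝ) * S) + lam ^ 2 * S * M)) *
          Real.exp (-(lam * ((s / k : ℝ) * S))) :=
    mul_le_mul_of_nonneg_right step4 (Real.exp_pos _).le
  have step6 : ((Nat.choose k s : ℝ) * Real.exp (lam * ((s / k : ℝ) * S) + lam ^ 2 * S * M)) *
      Real.exp (-(lam * ((s / k : ℝ) * S)))
      = (Nat.choose k s : ℝ) * Real.exp (lam ^ 2 * S * M) := by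
    rw [mul_assoc, ← Real.exp_add]
    ring_nf
  have main : (G.card : ℝ) * Real.exp t ≤ (Nat.choose k s : ℝ) * Real.exp (lam ^ 2 * S * M) := by
    calc (G.card : ℝ) * Real.exp t ≤ _ := step1
      _ ≤ _ := step2
      _ = _ := step3
      _ ≤ _ := step5
      _ = _ := step6
  rw [Real.exp_sub, ← mul_div_assoc, le_div_iff₀ (Real.exp_pos t)]
  exact main

/-- Let `A = {a 1, …, a k}` be a multiset of `k` nonnegative integers
with `max A > 0`, let `0 ≤ s ≤ k`, and let `B` be a uniformly random `s`-element
sub(multi)set of `A` (chosen via a uniformly random `s`-element subset `T` of the index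
set). Then for every `η > 0`,
`Pr[|σ(B) − (s/k)·σ(A)| ≥ η] ≤ 2·exp(−min{η²/(4σ(A)max(A)), η/(2max(A))})`. -/
theorem stmt6 (k s : ℕ) (hs : s ≤ k) (a : Fin k → ℕ)
    (hmax : 0 < Finset.univ.sup a) (η : ℝ) (hη : 0 < η) :
    (((Finset.powersetCard s (Finset.univ : Finset (Fin k))).filter fun T =>
        η ≤ |(∑ i ∈ T, (a i : ℝ)) - (s / k : ℝ) * ∑ i, (a i : ℝ)|).card : ℝ) /
      ((Finset.powersetCard s (Finset.univ : Finset (Fin k))).card : ℝ)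
      ≤ 2 * Real.exp (- min (η ^ 2 / (4 * (∑ i, (a i : ℝ)) * ((Finset.univ.sup a : ℕ) : ℝ)))
          (η / (2 * ((Finset.univ.sup a : ℕ) : ℝ)))) := by
  classical
  have hk : 0 < k := by
    rcases Nat.eq_zero_or_pos k with h | h
    · subst h
      simp [Finset.univ_eq_empty] at hmax
    · exact h
  set S : ℝ := ∑ i, (a i : ℝ) with hS_def
  set M : ℝ := ((Finset.univ.sup a : ℕ) : ℝ) with hM_def
  have hM0 : (0:ℝ) < M := by rw [hM_def]; exact_mod_cast hmax
  have hMa : ∀ i, (a i : ℝ) ≤ M := fun i => by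
    rw [hM_def]; exact_mod_cast Finset.le_sup (f := a) (Finset.mem_univ i)
  have hne : Nonempty (Fin k) := ⟨⟨0, hk⟩⟩
  have hSM : M ≤ S := by
    obtain ⟨i0, -, hi0⟩ := Finset.exists_mem_eq_sup (Finset.univ : Finset (Fin k))
      Finset.univ_nonempty a
    have : ((a i0 : ℕ) : ℝ) ≤ S :=
      Finset.single_le_sum (f := fun i => ((a i : ℕ) : ℝ))
        (fun i _ => Nat.cast_nonneg _) (Finset.mem_univ i0)
    rw [hM_def, hi0]
    exact_mod_cast this
  have hS0 : (0:ℝ) < S := lt_of_lt_of_le hM0 hSM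
  have hSne : S ≠ 0 := hS0.ne'
  have hMne : M ≠ 0 := hM0.ne'
  have hNcard : ((Finset.powersetCard s (Finset.univ : Finset (Fin k))).card : ℝ)
      = (Nat.choose k s : ℝ) := by
    rw [Finset.card_powersetCard, Finset.card_univ, Fintype.card_fin]
  have hN0 : (0:ℝ) < (Nat.choose k s : ℝ) := by
    exact_mod_cast Nat.choose_pos hs
  -- bounds on partial sums
  have hsig0 : ∀ T : Finset (Fin k), (0:ℝ) ≤ ∑ i ∈ T, (a i : ℝ) :=
    fun T => Finset.sum_nonneg fun i _ => Nat.cast_nonneg _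
  have hsigS : ∀ T : Finset (Fin k), (∑ i ∈ T, (a i : ℝ)) ≤ S :=
    fun T => Finset.sum_le_sum_of_subset_of_nonneg (Finset.subset_univ T)
      fun i _ _ => Nat.cast_nonneg _
  have hp0 : (0:ℝ) ≤ (s / k : ℝ) := by positivity
  have hp1 : (s / k : ℝ) ≤ 1 := by
    rw [div_le_one (by exact_mod_cast hk)]
    exact_mod_cast hs
  have hmu0 : (0:ℝ) ≤ (s / k : ℝ) * S := mul_nonneg hp0 hS0.le
  have hmuS : (s / k : ℝ) * S ≤ S := by nlinarith
  clear_value S M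
  by_cases hcase : η ≤ S
  · -- main case
    have hmin : min (η ^ 2 / (4 * S * M)) (η / (2 * M)) = η ^ 2 / (4 * S * M) := by
      refine min_eq_left ?_
      rw [div_le_div_iff₀ (mul_pos (mul_pos (by norm_num) hS0) hM0)
        (mul_pos (by norm_num) hM0)]
      nlinarith [mul_le_mul_of_nonneg_left hcase (mul_nonneg hη.le hM0.le),
        mul_nonneg (mul_nonneg hη.le hS0.le) hM0.le]
    set lam : ℝ := η / (2 * S * M) with hlam_def
    clear_value lam
    have h2SM : (0:ℝ) < 2 * S * M := mul_pos (mul_pos (by norm_num) hS0) hM0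
    have hlam0 : 0 < lam := by rw [hlam_def]; exact div_pos hη h2SM
    have hlamM : |lam| * M ≤ 1 := by
      rw [abs_of_pos hlam0, hlam_def]
      rw [div_mul_eq_mul_div, div_le_one h2SM]
      nlinarith [mul_le_mul_of_nonneg_right hcase hM0.le,
        mul_nonneg hS0.le hM0.le]
    have hlamM' : |(-lam)| * M ≤ 1 := by rwa [abs_neg]
    set F := ((Finset.powersetCard s (Finset.univ : Finset (Fin k))).filter fun T =>
        η ≤ |(∑ i ∈ T, (a i : ℝ)) - (s / k : ℝ) * S|) with hF_def
    set F1 := ((Finset.powersetCard s (Finset.univ : Finset (Fin k))).filter fun T =>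
        lam * η ≤ lam * (∑ i ∈ T, (a i : ℝ)) - lam * ((s / k : ℝ) * S)) with hF1_def
    set F2 := ((Finset.powersetCard s (Finset.univ : Finset (Fin k))).filter fun T =>
        lam * η ≤ (-lam) * (∑ i ∈ T, (a i : ℝ)) - (-lam) * ((s / k : ℝ) * S)) with hF2_def
    clear_value F F1 F2
    have hsubset : F ⊆ F1 ∪ F2 := by
      rw [hF_def, hF1_def, hF2_def]
      intro T hT
      rw [Finset.mem_filter] at hT
      obtain ⟨hTm, hTabs⟩ := hT
      rw [Finset.mem_union, Finset.mem_filter, Finset.mem_filter]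
      rcases abs_cases ((∑ i ∈ T, (a i : ℝ)) - (s / k : ℝ) * S) with ⟨heq, -⟩ | ⟨heq, -⟩
      · left
        refine ⟨hTm, ?_⟩
        rw [heq] at hTabs
        nlinarith
      · right
        refine ⟨hTm, ?_⟩
        rw [heq] at hTabs
        nlinarith
    have hb1 := my_tail hk hs a hMa hlamM (lam * η)
    have hb2 := my_tail hk hs a hMa hlamM' (lam * η)
    rw [← hS_def] at hb1 hb2
    have hexp_eq : lam ^ 2 * S * M - lam * η = -(η ^ 2 / (4 * S * M)) := by
      rw [hlam_def]
      field_simp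
      ring
    have hexp_eq2 : (-lam) ^ 2 * S * M - lam * η = -(η ^ 2 / (4 * S * M)) := by
      rw [neg_pow, ← hexp_eq]; ring
    rw [hexp_eq] at hb1
    rw [hexp_eq2] at hb2
    have hb1' : (F1.card : ℝ) ≤ (Nat.choose k s : ℝ) * Real.exp (-(η ^ 2 / (4 * S * M))) := by
      rw [hF1_def]; exact hb1
    have hb2' : (F2.card : ℝ) ≤ (Nat.choose k s : ℝ) * Real.exp (-(η ^ 2 / (4 * S * M))) := by
      rw [hF2_def]; exact hb2
    have hcards : (F.card : ℝ) ≤ (F1.card : ℝ) + (F2.card : ℝ) := by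
      have h1 := Finset.card_le_card hsubset
      have h2 := Finset.card_union_le F1 F2
      exact_mod_cast le_trans h1 h2
    rw [hmin, hNcard, div_le_iff₀ hN0]
    calc (F.card : ℝ) ≤ (F1.card : ℝ) + (F2.card : ℝ) := hcards
      _ ≤ (Nat.choose k s : ℝ) * Real.exp (-(η ^ 2 / (4 * S * M)))
          + (Nat.choose k s : ℝ) * Real.exp (-(η ^ 2 / (4 * S * M))) := add_le_add hb1' hb2'
      _ = 2 * Real.exp (-(η ^ 2 / (4 * S * M))) * (Nat.choose k s : ℝ) := by ring
  · -- η > S : event is empty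
    push_neg at hcase
    have hempty : ((Finset.powersetCard s (Finset.univ : Finset (Fin k))).filter fun T =>
        η ≤ |(∑ i ∈ T, (a i : ℝ)) - (s / k : ℝ) * S|) = ∅ := by
      rw [Finset.filter_eq_empty_iff]
      intro T _
      rw [not_le]
      have h1 : |(∑ i ∈ T, (a i : ℝ)) - (s / k : ℝ) * S| ≤ S := by
        rw [abs_le]
        constructor
        · linarith [hsig0 T, hmuS]
        · linarith [hsigS T, hmu0]
      linarith
    rw [hempty, Finset.card_empty]
    rw [Nat.cast_zero, zero_div]
    positivity
end

section
/- Let A = {a_1, …, a_k} be a multi-set of k nonnegative integers, let A* be a sub-multi-set of A (identified with a subset of the index set {1, …, k}), let 0 ≤ s ≤ k, and let B be a multi-set of s integers sampled uniformly at random from A without replacement. Then for every real c ≥ 1, Pr[ |σ(B ∩ A*) − (s/k)·σ(A*)| > 4c·√|A*|·max(A*) ] ≤ exp(−c). -/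
/-!
Stein's method of exchangeable pairs. For weights `w` on a `k`-element set, put
`W(T) = ∑_{i ∈ T} w i - (s / k) ∑_i w i`. Replacing some `i ∈ T` by some `j ∉ T` is an
involution on such triples `(T, i, j)` that changes `W` by `w i - w j`, and
`∑_{i ∈ T, j ∉ T} (w i - w j) = k W(T)`. Symmetrising over the exchange and using
`(u - v)(eᵘ - eᵛ) ≤ (u - v)²(eᵘ + eᵛ)/2` gives `m' λ ≤ λ (∑ w i²) m λ` for
`m λ = ∑_T exp (λ W(T))`, hence `m λ ≤ m 0 · exp (λ² ∑ w i² / 2)`, and Chernoff's bound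
gives the tail `2 exp (-t² / (2 ∑ w i²))`. With `w` equal to `a` on `A*` and `0` elsewhere,
`∑ w i² ≤ |A*| max(A*)²`, so the threshold `4c √|A*| max(A*)` has probability at most
`2 exp (-8c²) ≤ exp (-c)`.
-/

open Finset Real

theorem sinh_le_mul_cosh {x : ℝ} (hx : 0 ≤ x) : sinh x ≤ x * cosh x := by
  have hderiv : ∀ y, HasDerivAt (fun y => y * cosh y - sinh y) (y * sinh y) y := fun y => by
    have h := ((hasDerivAt_id' y).fun_mul (Real.hasDerivAt_cosh y)).fun_sub (Real.hasDerivAt_sinh y)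
    exact h.congr_deriv (by ring)
  have hmono : MonotoneOn (fun y => y * cosh y - sinh y) (Set.Ici 0) := by
    refine monotoneOn_of_deriv_nonneg (convex_Ici 0)
      (HasDerivAt.continuousOn fun y _ => hderiv y)
      (fun y _ => (hderiv y).differentiableAt.differentiableWithinAt) fun y hy => ?_
    rw [interior_Ici] at hy
    rw [(hderiv y).deriv]
    exact mul_nonneg (le_of_lt hy) (sinh_nonneg_iff.2 (le_of_lt hy))
  simpa using hmono Set.self_mem_Ici hx hx

theorem mul_sinh_le_sq_mul_cosh (x : ℝ) : x * sinh x ≤ x ^ 2 * cosh x := by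
  rcases le_total 0 x with hx | hx
  · nlinarith [mul_le_mul_of_nonneg_left (sinh_le_mul_cosh hx) hx]
  · have h := sinh_le_mul_cosh (neg_nonneg.2 hx)
    rw [sinh_neg, cosh_neg] at h
    nlinarith [mul_le_mul_of_nonpos_left h hx]

theorem sub_mul_exp_sub_exp_le (u v : ℝ) :
    (u - v) * (exp u - exp v) ≤ (u - v) ^ 2 / 2 * (exp u + exp v) := by
  obtain ⟨m, x, rfl, rfl⟩ : ∃ m x : ℝ, u = m + x ∧ v = m + -x :=
    ⟨(u + v) / 2, (u - v) / 2, by ring, by ring⟩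
  have h := mul_le_mul_of_nonneg_left (mul_sinh_le_sq_mul_cosh x) (exp_pos m).le
  rw [sinh_eq, cosh_eq] at h
  rw [exp_add, exp_add]
  nlinarith

variable {α : Type*} [Fintype α]

noncomputable def deviation (s : ℕ) (w : α → ℝ) (T : Finset α) : ℝ :=
  ∑ i ∈ T, w i - s / Fintype.card α * ∑ i, w i

theorem deviation_mul (s : ℕ) (x : ℝ) (w : α → ℝ) (T : Finset α) :
    deviation s (fun i => x * w i) T = x * deviation s w T := by
  simp only [deviation, ← mul_sum]
  ring

theorem deviation_neg (s : ℕ) (w : α → ℝ) (T : Finset α) :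
    deviation s (fun i => -w i) T = -deviation s w T := by
  simp only [deviation, sum_neg_distrib]
  ring

theorem sum_sum_sub_sq_le (w : α → ℝ) :
    ∑ i, ∑ j, (w i - w j) ^ 2 ≤ 2 * Fintype.card α * ∑ i, w i ^ 2 := by
  have h : ∑ i, ∑ j, (w i - w j) ^ 2
      = 2 * Fintype.card α * ∑ i, w i ^ 2 - 2 * (∑ i, w i) ^ 2 := by
    simp only [sub_sq, sum_add_distrib, sum_sub_distrib, sum_const, card_univ, nsmul_eq_mul,
      ← mul_sum, ← sum_mul, sq (∑ i, w i)]
    ring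
  rw [h]
  nlinarith [sq_nonneg (∑ i, w i)]

section Exchange

variable [DecidableEq α]

variable (α) in
def exchanges (s : ℕ) :
    Finset (Σ _ : Finset α, α × α) :=
  (powersetCard s univ).sigma fun T => T ×ˢ Tᶜ

def exchange : (Σ _ : Finset α, α × α) → Σ _ : Finset α, α × α
  | ⟨T, i, j⟩ => ⟨insert j (T.erase i), j, i⟩

theorem mem_exchanges {s : ℕ} {T : Finset α} {i j : α} :
    (⟨T, i, j⟩ : Σ _ : Finset α, α × α) ∈ exchanges α s ↔ #T = s ∧ i ∈ T ∧ j ∉ T := by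
  simp [exchanges]

theorem exchange_mem_exchanges {s : ℕ} {p : Σ _ : Finset α, α × α} (hp : p ∈ exchanges α s) :
    exchange p ∈ exchanges α s := by
  obtain ⟨T, i, j⟩ := p
  obtain ⟨hcard, hi, hj⟩ := mem_exchanges.1 hp
  have hji : j ≠ i := by rintro rfl; exact hj hi
  refine mem_exchanges.2 ⟨?_, mem_insert_self j _, ?_⟩
  · rw [card_insert_of_notMem (fun h => hj (mem_of_mem_erase h)), card_erase_of_mem hi,
      Nat.sub_add_cancel (card_pos.2 ⟨i, hi⟩), hcard]
  · simp [hji.symm]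

theorem exchange_exchange {s : ℕ} {p : Σ _ : Finset α, α × α} (hp : p ∈ exchanges α s) :
    exchange (exchange p) = p := by
  obtain ⟨T, i, j⟩ := p
  obtain ⟨-, hi, hj⟩ := mem_exchanges.1 hp
  simp only [exchange, erase_insert (fun h => hj (mem_of_mem_erase h)), insert_erase hi]

theorem sum_exchanges_comp_exchange {β : Type*} [AddCommMonoid β] {s : ℕ}
    (F : (Σ _ : Finset α, α × α) → β) :
    ∑ p ∈ exchanges α s, F (exchange p) = ∑ p ∈ exchanges α s, F p :=
  sum_nbij' exchange exchange (fun _ hp => exchange_mem_exchanges hp)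
    (fun _ hp => exchange_mem_exchanges hp) (fun _ hp => exchange_exchange hp)
    (fun _ hp => exchange_exchange hp) fun _ _ => rfl

theorem sum_exchanges {β : Type*} [AddCommMonoid β] {s : ℕ} (F : (Σ _ : Finset α, α × α) → β) :
    ∑ p ∈ exchanges α s, F p = ∑ T ∈ powersetCard s univ, ∑ i ∈ T, ∑ j ∈ Tᶜ, F ⟨T, i, j⟩ := by
  simp only [exchanges, sum_sigma, sum_product]

theorem sum_exchanges_eq_half_sum_add {s : ℕ} (F : (Σ _ : Finset α, α × α) → ℝ) :
    ∑ p ∈ exchanges α s, F p = (∑ p ∈ exchanges α s, (F p + F (exchange p))) / 2 := by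
  rw [sum_add_distrib, sum_exchanges_comp_exchange]
  ring

theorem deviation_insert_erase {s : ℕ} (w : α → ℝ) {T : Finset α} {i j : α} (hi : i ∈ T)
    (hj : j ∉ T) : deviation s w (insert j (T.erase i)) = deviation s w T - (w i - w j) := by
  have h := sum_erase_add T w hi
  rw [deviation, deviation, sum_insert (fun h => hj (mem_of_mem_erase h))]
  linarith

theorem sum_sum_compl_sub_eq_card_mul_deviation [Nonempty α] {s : ℕ} (w : α → ℝ) {T : Finset α}
    (hT : #T = s) :
    ∑ i ∈ T, ∑ j ∈ Tᶜ, (w i - w j) = Fintype.card α * deviation s w T := by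
  have hk : (Fintype.card α : ℝ) ≠ 0 := Nat.cast_ne_zero.2 Fintype.card_ne_zero
  have hcompl : ∑ j ∈ Tᶜ, w j = ∑ i, w i - ∑ i ∈ T, w i := by
    rw [← sum_compl_add_sum T w]; ring
  simp only [sum_sub_distrib, sum_const, nsmul_eq_mul, ← mul_sum, hcompl,
    card_compl, deviation]
  rw [Nat.cast_sub (hT ▸ card_le_univ T), hT]
  field_simp
  ring

theorem sum_exchanges_sub_mul_eq [Nonempty α] (s : ℕ) (w : α → ℝ) (f : Finset α → ℝ) :
    ∑ p ∈ exchanges α s, (w p.2.1 - w p.2.2) * f p.1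
      = Fintype.card α * ∑ T ∈ powersetCard s univ, deviation s w T * f T := by
  rw [sum_exchanges, mul_sum]
  refine sum_congr rfl fun T hT => ?_
  simp only [← sum_mul, sum_sum_compl_sub_eq_card_mul_deviation w (mem_powersetCard.1 hT).2]
  ring

theorem sum_exchanges_sub_mul_exp_le (s : ℕ) (w : α → ℝ) :
    ∑ p ∈ exchanges α s, (w p.2.1 - w p.2.2) * exp (deviation s w p.1)
      ≤ ∑ p ∈ exchanges α s, (w p.2.1 - w p.2.2) ^ 2 / 2 * exp (deviation s w p.1) := by
  set W : Finset α → ℝ := deviation s w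
  have hW : ∀ p ∈ exchanges α s, W p.1 - W (exchange p).1 = w p.2.1 - w p.2.2 := by
    rintro ⟨T, i, j⟩ hp
    obtain ⟨-, hi, hj⟩ := mem_exchanges.1 hp
    simp only [exchange, W, deviation_insert_erase w hi hj]
    ring
  rw [sum_exchanges_eq_half_sum_add fun p => (w p.2.1 - w p.2.2) * exp (W p.1),
    sum_exchanges_eq_half_sum_add fun p => (w p.2.1 - w p.2.2) ^ 2 / 2 * exp (W p.1)]
  refine div_le_div_of_nonneg_right (sum_le_sum fun p hp => ?_) two_pos.le
  obtain ⟨T, i, j⟩ := p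
  have h := sub_mul_exp_sub_exp_le (W T) (W (exchange ⟨T, i, j⟩).1)
  rw [hW _ hp] at h
  simp only [exchange] at h ⊢
  linarith

theorem sum_exchanges_sub_sq_mul_le (s : ℕ) (w : α → ℝ) {f : Finset α → ℝ}
    (hf : ∀ T, 0 ≤ f T) :
    ∑ p ∈ exchanges α s, (w p.2.1 - w p.2.2) ^ 2 * f p.1
      ≤ 2 * Fintype.card α * (∑ i, w i ^ 2) * ∑ T ∈ powersetCard s univ, f T := by
  rw [sum_exchanges, mul_sum]
  refine sum_le_sum fun T _ => ?_
  simp only [← sum_mul]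
  refine mul_le_mul_of_nonneg_right (le_trans ?_ (sum_sum_sub_sq_le w)) (hf T)
  calc ∑ i ∈ T, ∑ j ∈ Tᶜ, (w i - w j) ^ 2 ≤ ∑ i ∈ T, ∑ j, (w i - w j) ^ 2 :=
        sum_le_sum fun i _ => sum_le_sum_of_subset_of_nonneg (subset_univ _)
          fun _ _ _ => sq_nonneg _
    _ ≤ ∑ i, ∑ j, (w i - w j) ^ 2 :=
        sum_le_sum_of_subset_of_nonneg (subset_univ T) fun _ _ _ =>
          sum_nonneg fun _ _ => sq_nonneg _

end Exchange

theorem sum_deviation_mul_exp_le [Nonempty α] (s : ℕ) (w : α → ℝ) :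
    ∑ T ∈ powersetCard s univ, deviation s w T * exp (deviation s w T)
      ≤ (∑ i, w i ^ 2) * ∑ T ∈ powersetCard s univ, exp (deviation s w T) := by
  classical
  have hk : (0 : ℝ) < Fintype.card α := Nat.cast_pos.2 Fintype.card_pos
  refine le_of_mul_le_mul_left ?_ hk
  calc (Fintype.card α : ℝ) * ∑ T ∈ powersetCard s univ, deviation s w T * exp (deviation s w T)
      = ∑ p ∈ exchanges α s, (w p.2.1 - w p.2.2) * exp (deviation s w p.1) :=
        (sum_exchanges_sub_mul_eq s w _).symm
    _ ≤ (∑ p ∈ exchanges α s, (w p.2.1 - w p.2.2) ^ 2 * exp (deviation s w p.1)) / 2 := by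
        rw [sum_div]
        refine (sum_exchanges_sub_mul_exp_le s w).trans_eq (sum_congr rfl fun _ _ => ?_)
        ring
    _ ≤ 2 * Fintype.card α * (∑ i, w i ^ 2)
          * (∑ T ∈ powersetCard s univ, exp (deviation s w T)) / 2 := by
        gcongr
        exact sum_exchanges_sub_sq_mul_le s w fun _ => (exp_pos _).le
    _ = _ := by ring

theorem sum_exp_mul_deviation_le [Nonempty α] (s : ℕ) (w : α → ℝ) {l : ℝ} (hl : 0 ≤ l) :
    ∑ T ∈ powersetCard s univ, exp (l * deviation s w T)
      ≤ #(powersetCard s (univ : Finset α)) * exp (l ^ 2 * (∑ i, w i ^ 2) / 2) := by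
  set v := ∑ i, w i ^ 2
  set m : ℝ → ℝ := fun x => ∑ T ∈ powersetCard s univ, exp (x * deviation s w T)
  set m' : ℝ → ℝ := fun x =>
    ∑ T ∈ powersetCard s univ, deviation s w T * exp (x * deviation s w T)
  have hm : ∀ x, HasDerivAt m (m' x) x := fun x =>
    HasDerivAt.fun_sum fun T _ => by
      simpa [mul_comm] using (hasDerivAt_mul_const (deviation s w T) (x := x)).exp
  -- Scaling `w` by `x` turns the core inequality into `m' x ≤ x v m x`.
  have hm'_le : ∀ x, 0 < x → m' x ≤ x * v * m x := fun x hx => by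
    have h := sum_deviation_mul_exp_le s fun i => x * w i
    simp only [deviation_mul, mul_pow, ← mul_sum, mul_assoc] at h
    exact le_of_mul_le_mul_left (h.trans_eq (by ring)) hx
  set g : ℝ → ℝ := fun x => m x * exp (-(x ^ 2 * v / 2))
  have hg : ∀ x, HasDerivAt g ((m' x - x * v * m x) * exp (-(x ^ 2 * v / 2))) x := fun x => by
    have h := (hm x).mul ((((hasDerivAt_pow 2 x).mul_const v).div_const 2).fun_neg.exp)
    exact h.congr_deriv (by ring)
  have hanti : AntitoneOn g (Set.Ici 0) := by
    refine antitoneOn_of_deriv_nonpos (convex_Ici 0)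
      (HasDerivAt.continuousOn fun x _ => hg x)
      (fun x _ => (hg x).differentiableAt.differentiableWithinAt) fun x hx => ?_
    rw [interior_Ici] at hx
    rw [(hg x).deriv]
    exact mul_nonpos_of_nonpos_of_nonneg (sub_nonpos.2 (hm'_le x hx)) (exp_pos _).le
  have hgl : g l ≤ #(powersetCard s (univ : Finset α)) := by
    simpa [g, m] using hanti Set.self_mem_Ici hl hl
  calc m l = g l * exp (l ^ 2 * v / 2) := by
        simp only [g, mul_assoc, ← exp_add, neg_add_cancel, exp_zero, mul_one]
    _ ≤ _ := mul_le_mul_of_nonneg_right hgl (exp_pos _).le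

theorem card_filter_lt_deviation_le [Nonempty α] (s : ℕ) (w : α → ℝ) {t V : ℝ} (ht : 0 ≤ t)
    (hV : 0 < V) (hw : ∑ i, w i ^ 2 ≤ V) :
    (#{T ∈ powersetCard s (univ : Finset α) | t < deviation s w T} : ℝ)
      ≤ #(powersetCard s (univ : Finset α)) * exp (-(t ^ 2 / (2 * V))) := by
  set l := t / V
  have hl : 0 ≤ l := div_nonneg ht hV.le
  have hmarkov : (#{T ∈ powersetCard s (univ : Finset α) | t < deviation s w T} : ℝ)
      * exp (l * t) ≤ ∑ T ∈ powersetCard s univ, exp (l * deviation s w T) := by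
    rw [← nsmul_eq_mul]
    refine (card_nsmul_le_sum _ _ _ fun T hT => ?_).trans
      (sum_le_sum_of_subset_of_nonneg (filter_subset _ _) fun _ _ _ => (exp_pos _).le)
    exact exp_le_exp.2 (mul_le_mul_of_nonneg_left (mem_filter.1 hT).2.le hl)
  have hmgf : ∑ T ∈ powersetCard s univ, exp (l * deviation s w T)
      ≤ #(powersetCard s (univ : Finset α)) * exp (l ^ 2 * V / 2) := by
    refine (sum_exp_mul_deviation_le s w hl).trans ?_
    gcongr
  calc (#{T ∈ powersetCard s (univ : Finset α) | t < deviation s w T} : ℝ)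
      = #{T ∈ powersetCard s (univ : Finset α) | t < deviation s w T}
          * exp (l * t) * exp (-(l * t)) := by
        rw [mul_assoc, ← exp_add, add_neg_cancel, exp_zero, mul_one]
    _ ≤ #(powersetCard s (univ : Finset α)) * exp (l ^ 2 * V / 2) * exp (-(l * t)) :=
        mul_le_mul_of_nonneg_right (hmarkov.trans hmgf) (exp_pos _).le
    _ = #(powersetCard s (univ : Finset α)) * exp (-(t ^ 2 / (2 * V))) := by
        rw [mul_assoc, ← exp_add]
        congr 2
        simp only [l]
        field_simp
        ring

theorem card_filter_lt_abs_deviation_le [Nonempty α] (s : ℕ) (w : α → ℝ) {t V : ℝ} (ht : 0 ≤ t)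
    (hV : 0 < V) (hw : ∑ i, w i ^ 2 ≤ V) :
    (#{T ∈ powersetCard s (univ : Finset α) | t < |deviation s w T|} : ℝ)
      ≤ 2 * #(powersetCard s (univ : Finset α)) * exp (-(t ^ 2 / (2 * V))) := by
  classical
  have hupper := card_filter_lt_deviation_le s w ht hV hw
  have hlower := card_filter_lt_deviation_le s (fun i => -w i) ht hV (by simpa using hw)
  simp only [deviation_neg] at hlower
  simp only [lt_abs, filter_or]
  calc _ ≤ (#{T ∈ powersetCard s (univ : Finset α) | t < deviation s w T} : ℝ)
        + #{T ∈ powersetCard s (univ : Finset α) | t < -deviation s w T} := by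
        exact_mod_cast card_union_le _ _
    _ ≤ _ := by linarith

theorem sum_ite_mem_sq_le [DecidableEq α] (S : Finset α) (a : α → ℕ) :
    ∑ i, (if i ∈ S then (a i : ℝ) else 0) ^ 2 ≤ #S * ((S.sup a : ℕ) : ℝ) ^ 2 := by
  simp only [ite_pow, sum_ite_mem, univ_inter, ne_eq, OfNat.ofNat_ne_zero, not_false_eq_true,
    zero_pow, ← nsmul_eq_mul]
  refine sum_le_card_nsmul _ _ _ fun i hi => ?_
  have : (a i : ℝ) ≤ (S.sup a : ℕ) := Nat.cast_le.2 (le_sup hi)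
  gcongr

theorem two_mul_exp_neg_eight_mul_sq_le {c : ℝ} (hc : 1 ≤ c) :
    2 * exp (-(8 * c ^ 2)) ≤ exp (-c) := by
  have h : 2 ≤ exp (8 * c ^ 2 - c) := by
    linarith [add_one_le_exp 1, exp_le_exp.2 (show 1 ≤ 8 * c ^ 2 - c by nlinarith)]
  calc 2 * exp (-(8 * c ^ 2)) ≤ exp (8 * c ^ 2 - c) * exp (-(8 * c ^ 2)) := by gcongr
    _ = exp (-c) := by rw [← exp_add]; ring_nf

theorem stmt7_general (k s : ℕ) (a : Fin k → ℕ) (Tstar : Finset (Fin k))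
    (c : ℝ) (hc : 1 ≤ c) :
    (((Finset.powersetCard s (Finset.univ : Finset (Fin k))).filter fun T =>
        4 * c * Real.sqrt (Tstar.card) * ((Tstar.sup a : ℕ) : ℝ) <
          |(∑ i ∈ T ∩ Tstar, (a i : ℝ)) - (s / k : ℝ) * ∑ i ∈ Tstar, (a i : ℝ)|).card : ℝ) /
      ((Finset.powersetCard s (Finset.univ : Finset (Fin k))).card : ℝ)
      ≤ Real.exp (-c) := by
  set w : Fin k → ℝ := fun i => if i ∈ Tstar then (a i : ℝ) else 0
  have hdev : ∀ T, deviation s w T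
      = (∑ i ∈ T ∩ Tstar, (a i : ℝ)) - (s / k : ℝ) * ∑ i ∈ Tstar, (a i : ℝ) := fun T => by
    simp only [deviation, w, sum_ite_mem, univ_inter, Fintype.card_fin]
  simp only [← hdev]
  refine div_le_of_le_mul₀ (Nat.cast_nonneg _) (exp_pos _).le ?_
  rcases Nat.eq_zero_or_pos (Tstar.sup a) with hM | hM
  · have hw : w = 0 := funext fun i => by
      by_cases hi : i ∈ Tstar
      · simpa [w, hi] using Nat.eq_zero_of_le_zero (hM ▸ le_sup hi)
      · simp [w, hi]
    rw [filter_false_of_mem fun T _ => by simp [hw, hM, deviation], card_empty, Nat.cast_zero]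
    positivity
  obtain ⟨i₀, hi₀⟩ : Tstar.Nonempty := nonempty_iff_ne_empty.2 fun h => by simp [h] at hM
  have : Nonempty (Fin k) := ⟨i₀⟩
  set M : ℝ := ((Tstar.sup a : ℕ) : ℝ)
  set n : ℝ := ((#Tstar : ℕ) : ℝ)
  have hn : 0 < n := Nat.cast_pos.2 (card_pos.2 ⟨i₀, hi₀⟩)
  have hMpos : 0 < M := Nat.cast_pos.2 hM
  have htail := card_filter_lt_abs_deviation_le s w (t := 4 * c * √n * M) (by positivity)
    (by positivity) (sum_ite_mem_sq_le Tstar a)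
  have hexponent : (4 * c * √n * M) ^ 2 / (2 * (n * M ^ 2)) = 8 * c ^ 2 := by
    rw [mul_pow, mul_pow, mul_pow, sq_sqrt hn.le]
    field_simp
    ring
  rw [hexponent] at htail
  calc _ ≤ 2 * #(powersetCard s (univ : Finset (Fin k))) * exp (-(8 * c ^ 2)) := htail
    _ = #(powersetCard s (univ : Finset (Fin k))) * (2 * exp (-(8 * c ^ 2))) := by ring
    _ ≤ #(powersetCard s (univ : Finset (Fin k))) * exp (-c) := by
        gcongr
        exact two_mul_exp_neg_eight_mul_sq_le hc
    _ = _ := mul_comm _ _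

/-- Let `A = {a 1, …, a k}` be a multiset of `k` nonnegative integers,
let `A*` be a sub-multiset of `A` identified with an index set `T* ⊆ {1, …, k}`, let
`0 ≤ s ≤ k`, and let `B` be a uniformly random `s`-element sub(multi)set of `A`
(chosen via a uniformly random `s`-element index set `T`). Then for every `c ≥ 1`,
`Pr[|σ(B ∩ A*) − (s/k)·σ(A*)| > 4c·√|A*|·max(A*)] ≤ exp(−c)`. -/
theorem stmt7 (k s : ℕ) (hs : s ≤ k) (a : Fin k → ℕ) (Tstar : Finset (Fin k))
    (c : ℝ) (hc : 1 ≤ c) :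
    (((Finset.powersetCard s (Finset.univ : Finset (Fin k))).filter fun T =>
        4 * c * Real.sqrt (Tstar.card) * ((Tstar.sup a : ℕ) : ℝ) <
          |(∑ i ∈ T ∩ Tstar, (a i : ℝ)) - (s / k : ℝ) * ∑ i ∈ Tstar, (a i : ℝ)|).card : ℝ) /
      ((Finset.powersetCard s (Finset.univ : Finset (Fin k))).card : ℝ)
      ≤ Real.exp (-c) :=
  stmt7_general k s a Tstar c hc
end

section
/- Let A = {a_1, …, a_k} be a multi-set of k nonnegative integers, let A_1, …, A_ℓ be a partition of A with ℓ ≥ 2, let 0 ≤ s ≤ k, and let B be a multi-set of s integers sampled uniformly at random from A without replacement. Then for every real c ≥ 1, Pr[ |σ(B) − (s/k)·σ(A)| > 4c·(log ℓ)·Σ_{i=1}^ℓ √|A_i|·max(A_i) ] ≤ exp(−c). -/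
set_option maxHeartbeats 1000000

private lemma exp_le_one_add_self_add_sq {y : ℝ} (h : y ≤ 1) :
    Real.exp y ≤ 1 + y + y ^ 2 := by
  rcases le_or_gt y (-1) with h2 | h2
  · have h0 : Real.exp y ≤ 1 := Real.exp_le_one_iff.mpr (by linarith)
    nlinarith
  · have hy : |y| ≤ 1 := abs_le.mpr ⟨by linarith, h⟩
    have hb := Real.exp_bound hy (n := 2) (by norm_num)
    have hsum : ∑ m ∈ Finset.range 2, y ^ m / m.factorial = 1 + y := by
      simp [Finset.sum_range_succ]
    rw [hsum] at hb
    have h3 := (abs_sub_le_iff.mp hb).1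
    norm_num at h3
    nlinarith [sq_abs y]

private lemma exp_le_add_exp_sq (y : ℝ) : Real.exp y ≤ y + Real.exp (y ^ 2) := by
  rcases le_or_gt y 1 with h1 | h1
  · have h2 := exp_le_one_add_self_add_sq h1
    have h3 : 1 + y ^ 2 ≤ Real.exp (y ^ 2) := by
      have := Real.add_one_le_exp (y ^ 2); linarith
    linarith
  · have : Real.exp y ≤ Real.exp (y ^ 2) := Real.exp_le_exp.mpr (by nlinarith)
    linarith

private lemma two_point' {p : ℝ} (x : ℝ) (hp0 : 0 ≤ p) (hp1 : p ≤ 1) :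
    p * Real.exp x + (1 - p) ≤ Real.exp (p * x + x ^ 2) := by
  have ha := exp_le_add_exp_sq ((1 - p) * x)
  have hb := exp_le_add_exp_sq (-(p * x))
  have h1 : Real.exp (((1 - p) * x) ^ 2) ≤ Real.exp (x ^ 2) :=
    Real.exp_le_exp.mpr (by nlinarith [sq_nonneg x])
  have h2 : Real.exp ((-(p * x)) ^ 2) ≤ Real.exp (x ^ 2) :=
    Real.exp_le_exp.mpr (by nlinarith [sq_nonneg x])
  have key : p * Real.exp ((1 - p) * x) + (1 - p) * Real.exp (-(p * x)) ≤ Real.exp (x ^ 2) := by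
    have hA := mul_le_mul_of_nonneg_left ha hp0
    have hB := mul_le_mul_of_nonneg_left hb (by linarith : (0:ℝ) ≤ 1 - p)
    have hC := mul_le_mul_of_nonneg_left h1 hp0
    have hD := mul_le_mul_of_nonneg_left h2 (by linarith : (0:ℝ) ≤ 1 - p)
    nlinarith
  have e1 : Real.exp (p * x) * Real.exp ((1 - p) * x) = Real.exp x := by
    rw [← Real.exp_add]; congr 1; ring
  have e2 : Real.exp (p * x) * Real.exp (-(p * x)) = 1 := by
    rw [← Real.exp_add]; simp
  have expand : Real.exp (p * x) * (p * Real.exp ((1 - p) * x) + (1 - p) * Real.exp (-(p * x)))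
      = p * Real.exp x + (1 - p) := by
    rw [mul_add, show Real.exp (p * x) * (p * Real.exp ((1 - p) * x))
        = p * (Real.exp (p * x) * Real.exp ((1 - p) * x)) from by ring, e1,
      show Real.exp (p * x) * ((1 - p) * Real.exp (-(p * x)))
        = (1 - p) * (Real.exp (p * x) * Real.exp (-(p * x))) from by ring, e2, mul_one]
  calc p * Real.exp x + (1 - p)
      = Real.exp (p * x) * (p * Real.exp ((1 - p) * x) + (1 - p) * Real.exp (-(p * x))) :=
        expand.symm
    _ ≤ Real.exp (p * x) * Real.exp (x ^ 2) :=
        mul_le_mul_of_nonneg_left key (Real.exp_pos _).le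
    _ = Real.exp (p * x + x ^ 2) := (Real.exp_add _ _).symm

private lemma mgf_bound {ι : Type*} [DecidableEq ι] (b : ι → ℝ) (L : ℝ) :
    ∀ A : Finset ι, (∀ j ∈ A, 0 ≤ b j) → ∀ s : ℕ, s ≤ A.card →
      ∑ T ∈ A.powersetCard s, Real.exp (L * ∑ j ∈ T, b j) ≤
        (A.card.choose s : ℝ) *
          Real.exp (L * ((s : ℝ) / A.card * ∑ j ∈ A, b j) + L ^ 2 * ∑ j ∈ A, b j ^ 2) := by
  intro A
  induction A using Finset.strongInduction with
  | _ A IH =>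
    intro hb s hsA
    rcases s with _ | s'
    · rw [Finset.powersetCard_zero]
      have hQ : (0:ℝ) ≤ ∑ j ∈ A, b j ^ 2 := Finset.sum_nonneg fun j _ => sq_nonneg _
      simp only [Finset.sum_singleton, Finset.sum_empty, mul_zero, Real.exp_zero,
        Nat.choose_zero_right, Nat.cast_one, one_mul, Nat.cast_zero, zero_div, zero_mul]
      exact Real.one_le_exp (by positivity)
    · have hApos : 0 < A.card := lt_of_lt_of_le (Nat.succ_pos s') hsA
      obtain ⟨x, hx, hxmax⟩ := A.exists_max_image b (Finset.card_pos.mp hApos)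
      have hxA' : x ∉ A.erase x := Finset.notMem_erase x A
      have hins : insert x (A.erase x) = A := Finset.insert_erase hx
      have hcard : (A.erase x).card + 1 = A.card := Finset.card_erase_add_one hx
      rw [← hins]
      set A' := A.erase x with hA'def
      rw [Finset.powersetCard_succ_insert hxA']
      have hdisjU : Disjoint (A'.powersetCard (s'+1)) ((A'.powersetCard s').image (insert x)) := by
        rw [Finset.disjoint_left]
        intro T hT1 hT2
        obtain ⟨T', hT', rfl⟩ := Finset.mem_image.mp hT2
        exact hxA' ((Finset.mem_powersetCard.mp hT1).1 (Finset.mem_insert_self x T'))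
      rw [Finset.sum_union hdisjU]
      rw [Finset.sum_image (fun T₁ hT₁ T₂ hT₂ h => by
        have h1 : x ∉ T₁ := fun hh => hxA' ((Finset.mem_powersetCard.mp hT₁).1 hh)
        have h2 : x ∉ T₂ := fun hh => hxA' ((Finset.mem_powersetCard.mp hT₂).1 hh)
        rw [← Finset.erase_insert h1, h, Finset.erase_insert h2])]
      have hsum2 : ∀ T ∈ A'.powersetCard s',
          Real.exp (L * ∑ j ∈ insert x T, b j)
            = Real.exp (L * b x) * Real.exp (L * ∑ j ∈ T, b j) := by
        intro T hT
        have hTx : x ∉ T := fun hxT => hxA' ((Finset.mem_powersetCard.mp hT).1 hxT)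
        rw [Finset.sum_insert hTx, ← Real.exp_add]; congr 1; ring
      rw [Finset.sum_congr rfl hsum2, ← Finset.mul_sum]
      simp only [Finset.card_insert_of_notMem hxA', Finset.sum_insert hxA']
      have hbx : 0 ≤ b x := hb x hx
      have hb' : ∀ j ∈ A', 0 ≤ b j := fun j hj => hb j (Finset.mem_of_mem_erase hj)
      have hmax' : ∀ j ∈ A', b j ≤ b x := fun j hj => hxmax j (Finset.mem_of_mem_erase hj)
      have hs'n : s' ≤ A'.card := by omega
      set n := A'.card with hndef
      set σ' := ∑ j ∈ A', b j with hσdef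
      set Q' := ∑ j ∈ A', b j ^ 2 with hQdef
      set B := b x with hBdef
      have hσ'0 : 0 ≤ σ' := Finset.sum_nonneg hb'
      have hQ'0 : 0 ≤ Q' := Finset.sum_nonneg fun j _ => sq_nonneg _
      have hσ'le : σ' ≤ (n : ℝ) * B := by
        have := Finset.sum_le_card_nsmul A' b B hmax'
        simpa [nsmul_eq_mul] using this
      have IH2 := IH A' (Finset.erase_ssubset hx) hb' s' hs'n
      have IH1 : ∑ T ∈ A'.powersetCard (s'+1), Real.exp (L * ∑ j ∈ T, b j) ≤
          (n.choose (s'+1) : ℝ) *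
            Real.exp (L * (((s'+1 : ℕ) : ℝ) / n * σ') + L ^ 2 * Q') := by
        by_cases hc1 : s' + 1 ≤ n
        · exact IH A' (Finset.erase_ssubset hx) hb' (s'+1) hc1
        · have h0 : A'.powersetCard (s'+1) = ∅ :=
            Finset.powersetCard_eq_empty.mpr (by omega)
          have h1 : n.choose (s'+1) = 0 := Nat.choose_eq_zero_of_lt (by omega)
          simp [h0, h1]
      set N : ℝ := ((n+1).choose (s'+1) : ℝ) with hNdef
      set p : ℝ := ((s' : ℝ) + 1) / ((n : ℝ) + 1) with hpdef
      have hn1 : (0:ℝ) < (n : ℝ) + 1 := by positivity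
      have hp0 : 0 ≤ p := by positivity
      have hp1 : p ≤ 1 := by
        rw [hpdef, div_le_one hn1]
        have : s' + 1 ≤ n + 1 := by omega
        exact_mod_cast this
      have hPascal : N = (n.choose s' : ℝ) + (n.choose (s'+1) : ℝ) := by
        rw [hNdef]; exact_mod_cast congrArg Nat.cast (Nat.choose_succ_succ (n) (s'))
      have hCm : ((n:ℝ)+1) * (n.choose s' : ℝ) = N * ((s':ℝ)+1) := by
        rw [hNdef]; exact_mod_cast Nat.add_one_mul_choose_eq n s'
      have hC0 : (n.choose s' : ℝ) = p * N := by
        rw [hpdef, div_mul_eq_mul_div, eq_div_iff (ne_of_gt hn1)]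
        linear_combination hCm
      have hC1 : (n.choose (s'+1) : ℝ) = (1 - p) * N := by
        linear_combination -hPascal - hC0
      set u : ℝ := B - σ' / (n : ℝ) with hudef
      have hdivle : σ' / (n:ℝ) ≤ B := by
        rcases Nat.eq_zero_or_pos n with hn0 | hn0
        · have hσ0 : σ' = 0 := le_antisymm (by simpa [hn0] using hσ'le) hσ'0
          simp [hσ0, hbx]
        · rw [div_le_iff₀ (by exact_mod_cast hn0)]
          nlinarith
      have hdiv0 : 0 ≤ σ' / (n:ℝ) := div_nonneg hσ'0 (Nat.cast_nonneg n)
      have hu0 : 0 ≤ u := by rw [hudef]; linarith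
      have huB : u ≤ B := by rw [hudef]; linarith
      have hu2 : u ^ 2 ≤ B ^ 2 := by nlinarith
      have hlin : L * B + L * ((s' : ℝ) / n * σ') = L * (((s':ℝ)+1) / n * σ') + L * u := by
        rw [hudef]; ring
      have hexp : L * (((s':ℝ)+1) / n * σ') + p * (L * u) = L * (p * (B + σ')) := by
        rcases Nat.eq_zero_or_pos n with hn0 | hn0
        · have hσ0 : σ' = 0 := le_antisymm (by simpa [hn0] using hσ'le) hσ'0
          rw [hudef, hσ0, hn0]
          push_cast
          ring
        · have hnne : (n:ℝ) ≠ 0 := Nat.cast_ne_zero.mpr (by omega)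
          rw [hudef, hpdef]
          field_simp
          ring
      push_cast
      rw [show ((s':ℝ) + 1) / ((n:ℝ) + 1) = p from hpdef.symm]
      have hN0 : (0:ℝ) ≤ N := by rw [hNdef]; positivity
      have step1 : ∑ T ∈ A'.powersetCard (s'+1), Real.exp (L * ∑ j ∈ T, b j)
          ≤ (1 - p) * N * Real.exp ((L * (((s':ℝ)+1) / n * σ') + L ^ 2 * Q')) := by
        refine IH1.trans (le_of_eq ?_)
        rw [hC1]; push_cast; ring
      have step2 : Real.exp (L * B) * ∑ T ∈ A'.powersetCard s', Real.exp (L * ∑ j ∈ T, b j)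
          ≤ p * N * (Real.exp (L * (((s':ℝ)+1) / n * σ') + L ^ 2 * Q') * Real.exp (L * u)) := by
        have h2 := mul_le_mul_of_nonneg_left IH2 (Real.exp_pos (L * B)).le
        refine h2.trans (le_of_eq ?_)
        rw [hC0]
        rw [show Real.exp (L * B) * (p * N * Real.exp (L * ((s':ℝ) / n * σ') + L ^ 2 * Q'))
            = p * N * (Real.exp (L * B) * Real.exp (L * ((s':ℝ) / n * σ') + L ^ 2 * Q')) from by
          ring]
        congr 1
        rw [← Real.exp_add, ← Real.exp_add]
        congr 1
        linear_combination hlin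
      refine (add_le_add step1 step2).trans ?_
      have htp := two_point' (L * u) hp0 hp1
      calc (1 - p) * N * Real.exp (L * (((s':ℝ)+1) / n * σ') + L ^ 2 * Q')
            + p * N * (Real.exp (L * (((s':ℝ)+1) / n * σ') + L ^ 2 * Q') * Real.exp (L * u))
          = N * Real.exp (L * (((s':ℝ)+1) / n * σ') + L ^ 2 * Q')
              * (p * Real.exp (L * u) + (1 - p)) := by ring
        _ ≤ N * Real.exp (L * (((s':ℝ)+1) / n * σ') + L ^ 2 * Q')
              * Real.exp (p * (L * u) + (L * u) ^ 2) := by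
            refine mul_le_mul_of_nonneg_left htp ?_
            positivity
        _ = N * Real.exp ((L * (((s':ℝ)+1) / n * σ') + L ^ 2 * Q')
              + (p * (L * u) + (L * u) ^ 2)) := by
            rw [mul_assoc, ← Real.exp_add]
        _ ≤ N * Real.exp (L * (p * (B + σ')) + L ^ 2 * (B ^ 2 + Q')) := by
            refine mul_le_mul_of_nonneg_left (Real.exp_le_exp.mpr ?_) hN0
            have hq : L ^ 2 * u ^ 2 ≤ L ^ 2 * B ^ 2 :=
              mul_le_mul_of_nonneg_left hu2 (sq_nonneg L)
            have hsq : (L * u) ^ 2 = L ^ 2 * u ^ 2 := by ring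
            clear_value u p σ' B Q' N
            linarith [hexp, hq, hsq]

private lemma tail_bound {k s : ℕ} (hs : s ≤ k) (b : Fin k → ℝ)
    (hb : ∀ j, 0 ≤ b j) (Q t : ℝ) (hQ : Q = ∑ j, b j ^ 2) (hQpos : 0 < Q) (htpos : 0 < t) :
    (((Finset.powersetCard s (Finset.univ : Finset (Fin k))).filter fun T =>
        t < |(∑ i ∈ T, b i) - ((s : ℝ) / (k : ℝ)) * ∑ i, b i|).card : ℝ)
      ≤ 2 * (k.choose s : ℝ) * Real.exp (-(t ^ 2 / (4 * Q))) := by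
  classical
  set K : ℝ := (k.choose s : ℝ) with hK
  set σ : ℝ := ∑ i, b i with hσ
  set m : ℝ := ((s : ℝ) / (k : ℝ)) * σ with hm
  set L : ℝ := t / (2 * Q) with hL
  have hLpos : 0 < L := by rw [hL]; positivity
  have hmgf : ∀ L' : ℝ,
      ∑ T ∈ Finset.powersetCard s (Finset.univ : Finset (Fin k)),
          Real.exp (L' * ∑ j ∈ T, b j)
        ≤ K * Real.exp (L' * m + L' ^ 2 * Q) := by
    intro L'
    have h := mgf_bound b L' Finset.univ (fun j _ => hb j) s (by simpa using hs)
    simpa [hσ, hm, hQ, mul_assoc] using h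
  set pc := Finset.powersetCard s (Finset.univ : Finset (Fin k)) with hpc
  -- upper tail
  have hUp : ((pc.filter fun T => m + t < ∑ j ∈ T, b j).card : ℝ)
      ≤ K * Real.exp (L ^ 2 * Q - L * t) := by
    set F := pc.filter fun T => m + t < ∑ j ∈ T, b j with hF
    have h1 : (F.card : ℝ) * Real.exp (L * (m + t)) ≤ K * Real.exp (L * m + L ^ 2 * Q) := by
      calc (F.card : ℝ) * Real.exp (L * (m + t))
          = ∑ _T ∈ F, Real.exp (L * (m + t)) := by rw [Finset.sum_const, nsmul_eq_mul]
        _ ≤ ∑ T ∈ F, Real.exp (L * ∑ j ∈ T, b j) := by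
            refine Finset.sum_le_sum fun T hT => ?_
            have := (Finset.mem_filter.mp hT).2
            exact Real.exp_le_exp.mpr (mul_le_mul_of_nonneg_left this.le hLpos.le)
        _ ≤ ∑ T ∈ pc, Real.exp (L * ∑ j ∈ T, b j) :=
            Finset.sum_le_sum_of_subset_of_nonneg (Finset.filter_subset _ _)
              (fun _ _ _ => (Real.exp_pos _).le)
        _ ≤ K * Real.exp (L * m + L ^ 2 * Q) := hmgf L
    have h2 := mul_le_mul_of_nonneg_right h1 (Real.exp_pos (-(L * (m + t)))).le
    calc (F.card : ℝ)
        = (F.card : ℝ) * Real.exp (L * (m + t)) * Real.exp (-(L * (m + t))) := by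
          rw [mul_assoc, ← Real.exp_add]; simp
      _ ≤ K * Real.exp (L * m + L ^ 2 * Q) * Real.exp (-(L * (m + t))) := h2
      _ = K * Real.exp (L ^ 2 * Q - L * t) := by
          rw [mul_assoc, ← Real.exp_add]; congr 2; ring
  -- lower tail
  have hLo : ((pc.filter fun T => ∑ j ∈ T, b j < m - t).card : ℝ)
      ≤ K * Real.exp (L ^ 2 * Q - L * t) := by
    set F := pc.filter fun T => ∑ j ∈ T, b j < m - t with hF
    have h1 : (F.card : ℝ) * Real.exp (-L * (m - t)) ≤ K * Real.exp (-L * m + L ^ 2 * Q) := by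
      calc (F.card : ℝ) * Real.exp (-L * (m - t))
          = ∑ _T ∈ F, Real.exp (-L * (m - t)) := by rw [Finset.sum_const, nsmul_eq_mul]
        _ ≤ ∑ T ∈ F, Real.exp (-L * ∑ j ∈ T, b j) := by
            refine Finset.sum_le_sum fun T hT => ?_
            have hlt := (Finset.mem_filter.mp hT).2
            refine Real.exp_le_exp.mpr ?_
            have := mul_le_mul_of_nonneg_left hlt.le hLpos.le
            nlinarith
        _ ≤ ∑ T ∈ pc, Real.exp (-L * ∑ j ∈ T, b j) :=
            Finset.sum_le_sum_of_subset_of_nonneg (Finset.filter_subset _ _)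
              (fun _ _ _ => (Real.exp_pos _).le)
        _ ≤ K * Real.exp (-L * m + (-L) ^ 2 * Q) := hmgf (-L)
        _ = K * Real.exp (-L * m + L ^ 2 * Q) := by ring_nf
    have h2 := mul_le_mul_of_nonneg_right h1 (Real.exp_pos (-(-L * (m - t)))).le
    calc (F.card : ℝ)
        = (F.card : ℝ) * Real.exp (-L * (m - t)) * Real.exp (-(-L * (m - t))) := by
          rw [mul_assoc, ← Real.exp_add]; simp
      _ ≤ K * Real.exp (-L * m + L ^ 2 * Q) * Real.exp (-(-L * (m - t))) := h2
      _ = K * Real.exp (L ^ 2 * Q - L * t) := by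
          rw [mul_assoc, ← Real.exp_add]; congr 2; ring
  -- combine
  have hsub : (pc.filter fun T => t < |(∑ i ∈ T, b i) - m|)
      ⊆ (pc.filter fun T => m + t < ∑ j ∈ T, b j) ∪ (pc.filter fun T => ∑ j ∈ T, b j < m - t) := by
    intro T hT
    obtain ⟨hTpc, hTlt⟩ := Finset.mem_filter.mp hT
    rcases lt_abs.mp hTlt with h | h
    · exact Finset.mem_union_left _ (Finset.mem_filter.mpr ⟨hTpc, by linarith⟩)
    · exact Finset.mem_union_right _ (Finset.mem_filter.mpr ⟨hTpc, by linarith⟩)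
  have hcards : ((pc.filter fun T => t < |(∑ i ∈ T, b i) - m|).card : ℝ)
      ≤ ((pc.filter fun T => m + t < ∑ j ∈ T, b j).card : ℝ)
        + ((pc.filter fun T => ∑ j ∈ T, b j < m - t).card : ℝ) := by
    have h1 := Finset.card_le_card hsub
    have h2 := Finset.card_union_le (pc.filter fun T => m + t < ∑ j ∈ T, b j)
      (pc.filter fun T => ∑ j ∈ T, b j < m - t)
    exact_mod_cast le_trans h1 h2
  have hexparg : L ^ 2 * Q - L * t = -(t ^ 2 / (4 * Q)) := by
    rw [hL]
    field_simp
    ring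
  calc ((pc.filter fun T => t < |(∑ i ∈ T, b i) - m|).card : ℝ)
      ≤ _ + _ := hcards
    _ ≤ K * Real.exp (L ^ 2 * Q - L * t) + K * Real.exp (L ^ 2 * Q - L * t) :=
        add_le_add hUp hLo
    _ = 2 * K * Real.exp (-(t ^ 2 / (4 * Q))) := by rw [hexparg]; ring

/-- Let `A = {a 1, …, a k}` be a multiset of `k` nonnegative integers,
let the index sets `P 1, …, P ℓ` (with `ℓ ≥ 2`) form a partition of `{1, …, k}`
(inducing a partition `A 1, …, A ℓ` of `A`), let `0 ≤ s ≤ k`, and let `B` be a uniformly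
random `s`-element sub(multi)set of `A` (chosen via a uniformly random `s`-element
index set `T`). Then for every `c ≥ 1`,
`Pr[|σ(B) − (s/k)·σ(A)| > 4c·(log ℓ)·Σᵢ √|A i|·max(A i)] ≤ exp(−c)`. -/
theorem stmt8 (k s ℓ : ℕ) (hs : s ≤ k) (hℓ : 2 ≤ ℓ) (a : Fin k → ℕ)
    (P : Fin ℓ → Finset (Fin k))
    (hdisj : ∀ i j, i ≠ j → Disjoint (P i) (P j))
    (hcover : Finset.univ.biUnion P = (Finset.univ : Finset (Fin k)))
    (c : ℝ) (hc : 1 ≤ c) :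
    (((Finset.powersetCard s (Finset.univ : Finset (Fin k))).filter fun T =>
        4 * c * Real.logb 2 ℓ *
            ∑ i, Real.sqrt ((P i).card) * (((P i).sup a : ℕ) : ℝ) <
          |(∑ i ∈ T, (a i : ℝ)) - (s / k : ℝ) * ∑ i, (a i : ℝ)|).card : ℝ) /
      ((Finset.powersetCard s (Finset.univ : Finset (Fin k))).card : ℝ)
      ≤ Real.exp (-c) := by
  classical
  have hx1 : 1 ≤ Real.logb 2 ℓ := by
    have h2ℓ : (2:ℝ) ≤ (ℓ:ℝ) := by exact_mod_cast hℓ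
    calc (1:ℝ) = Real.logb 2 2 := (Real.logb_self_eq_one (by norm_num)).symm
      _ ≤ Real.logb 2 ℓ := Real.logb_le_logb_of_le (by norm_num) (by norm_num) h2ℓ
  set x : ℝ := Real.logb 2 ℓ with hxdef
  set S : ℝ := ∑ i, Real.sqrt ((P i).card) * (((P i).sup a : ℕ) : ℝ) with hSdef
  have hS0 : 0 ≤ S :=
    Finset.sum_nonneg fun i _ => mul_nonneg (Real.sqrt_nonneg _) (Nat.cast_nonneg _)
  set Q : ℝ := ∑ j : Fin k, (a j : ℝ) ^ 2 with hQdef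
  have hQ0 : 0 ≤ Q := Finset.sum_nonneg fun j _ => sq_nonneg _
  -- Q ≤ S ^ 2
  have hQS : Q ≤ S ^ 2 := by
    have hpd : Set.PairwiseDisjoint (Finset.univ : Finset (Fin ℓ)) P :=
      fun i _ j _ hij => hdisj i j hij
    have hsplit : Q = ∑ i, ∑ j ∈ P i, (a j : ℝ) ^ 2 := by
      rw [hQdef, ← Finset.sum_biUnion hpd, hcover]
    have hblock : ∀ i, ∑ j ∈ P i, (a j : ℝ) ^ 2
        ≤ (Real.sqrt ((P i).card) * (((P i).sup a : ℕ) : ℝ)) ^ 2 := by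
      intro i
      have h1 : ∑ j ∈ P i, (a j : ℝ) ^ 2 ≤ ((P i).card : ℝ) * (((P i).sup a : ℕ) : ℝ) ^ 2 := by
        have := Finset.sum_le_card_nsmul (P i) (fun j => (a j : ℝ) ^ 2)
          ((((P i).sup a : ℕ) : ℝ) ^ 2) (fun j hj => by
            have hle : a j ≤ (P i).sup a := Finset.le_sup hj
            have : (a j : ℝ) ≤ (((P i).sup a : ℕ) : ℝ) := by exact_mod_cast hle
            have h0 : (0:ℝ) ≤ (a j : ℝ) := Nat.cast_nonneg _
            exact pow_le_pow_left₀ h0 this 2)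
        simpa [nsmul_eq_mul] using this
      have h2 : (Real.sqrt ((P i).card)) ^ 2 = ((P i).card : ℝ) :=
        Real.sq_sqrt (Nat.cast_nonneg _)
      calc ∑ j ∈ P i, (a j : ℝ) ^ 2 ≤ ((P i).card : ℝ) * (((P i).sup a : ℕ) : ℝ) ^ 2 := h1
        _ = (Real.sqrt ((P i).card) * (((P i).sup a : ℕ) : ℝ)) ^ 2 := by
            rw [mul_pow, h2]
    have hsum2 : ∑ i, (Real.sqrt ((P i).card) * (((P i).sup a : ℕ) : ℝ)) ^ 2 ≤ S ^ 2 := by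
      have hterm : ∀ i ∈ (Finset.univ : Finset (Fin ℓ)),
          (Real.sqrt ((P i).card) * (((P i).sup a : ℕ) : ℝ)) ^ 2
            ≤ (Real.sqrt ((P i).card) * (((P i).sup a : ℕ) : ℝ)) * S := by
        intro i _
        have hi0 : 0 ≤ Real.sqrt ((P i).card) * (((P i).sup a : ℕ) : ℝ) :=
          mul_nonneg (Real.sqrt_nonneg _) (Nat.cast_nonneg _)
        have hiS : Real.sqrt ((P i).card) * (((P i).sup a : ℕ) : ℝ) ≤ S := by
          rw [hSdef]
          exact Finset.single_le_sum
            (f := fun i => Real.sqrt ((P i).card) * (((P i).sup a : ℕ) : ℝ))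
            (fun j _ => mul_nonneg (Real.sqrt_nonneg _) (Nat.cast_nonneg _))
            (Finset.mem_univ i)
        nlinarith
      calc ∑ i, (Real.sqrt ((P i).card) * (((P i).sup a : ℕ) : ℝ)) ^ 2
          ≤ ∑ i, (Real.sqrt ((P i).card) * (((P i).sup a : ℕ) : ℝ)) * S :=
            Finset.sum_le_sum hterm
        _ = S * S := by rw [← Finset.sum_mul, ← hSdef]
        _ = S ^ 2 := by ring
    calc Q = ∑ i, ∑ j ∈ P i, (a j : ℝ) ^ 2 := hsplit
      _ ≤ ∑ i, (Real.sqrt ((P i).card) * (((P i).sup a : ℕ) : ℝ)) ^ 2 :=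
          Finset.sum_le_sum fun i _ => hblock i
      _ ≤ S ^ 2 := hsum2
  have hcpos : (0:ℝ) < c := lt_of_lt_of_le one_pos hc
  have hxpos : (0:ℝ) < x := lt_of_lt_of_le one_pos hx1
  by_cases hQz : Q = 0
  · -- all values are zero: the event is empty
    have hall : ∀ j : Fin k, (a j : ℝ) = 0 := by
      intro j
      have h := (Finset.sum_eq_zero_iff_of_nonneg
        (fun j _ => sq_nonneg ((a j : ℝ)))).mp (hQdef ▸ hQz) j (Finset.mem_univ j)
      exact pow_eq_zero_iff (by norm_num) |>.mp h
    have hfe : ((Finset.powersetCard s (Finset.univ : Finset (Fin k))).filter fun T =>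
        4 * c * x * S <
          |(∑ i ∈ T, (a i : ℝ)) - (s / k : ℝ) * ∑ i, (a i : ℝ)|) = ∅ := by
      refine Finset.filter_false_of_mem fun T _ => ?_
      have hz1 : (∑ i ∈ T, (a i : ℝ)) = 0 := Finset.sum_eq_zero fun i _ => hall i
      have hz2 : (∑ i, (a i : ℝ)) = 0 := Finset.sum_eq_zero fun i _ => hall i
      rw [hz1, hz2]
      simp only [mul_zero, sub_zero, abs_zero]
      push_neg
      have h40 : (0:ℝ) ≤ 4 := by norm_num
      exact mul_nonneg (mul_nonneg (mul_nonneg h40 hcpos.le) hxpos.le) hS0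
    rw [hfe]
    simp only [Finset.card_empty, Nat.cast_zero, zero_div]
    exact (Real.exp_pos _).le
  · have hQpos : 0 < Q := lt_of_le_of_ne hQ0 (Ne.symm hQz)
    have hSpos : 0 < S := by nlinarith
    set t : ℝ := 4 * c * x * S with htdef
    have htpos : 0 < t := by
      rw [htdef]
      exact mul_pos (mul_pos (mul_pos (by norm_num : (0:ℝ) < 4) hcpos) hxpos) hSpos
    have htb := tail_bound hs (fun j => (a j : ℝ)) (fun j => Nat.cast_nonneg _) Q t
      hQdef hQpos htpos
    have hNpos : (0:ℝ) < (k.choose s : ℝ) := by exact_mod_cast Nat.choose_pos hs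
    clear_value x S Q t
    have hcardpc : ((Finset.powersetCard s (Finset.univ : Finset (Fin k))).card : ℝ)
        = (k.choose s : ℝ) := by
      rw [Finset.card_powersetCard]
      simp
    rw [hcardpc, div_le_iff₀ hNpos]
    -- match the filter in the goal with that of tail_bound
    refine htb.trans ?_
    -- 2 * exp(-(t^2/(4Q))) ≤ exp(-c)
    have hfrac : 4 * c ^ 2 * x ^ 2 ≤ t ^ 2 / (4 * Q) := by
      rw [le_div_iff₀ (by linarith : (0:ℝ) < 4 * Q)]
      have ht2 : t ^ 2 = 16 * c ^ 2 * x ^ 2 * S ^ 2 := by rw [htdef]; ring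
      rw [ht2]
      have := mul_le_mul_of_nonneg_left hQS (by positivity : (0:ℝ) ≤ 4 * c ^ 2 * x ^ 2)
      linarith
    have hlog2 : Real.log 2 ≤ 1 := by
      have := Real.log_le_sub_one_of_pos (by norm_num : (0:ℝ) < 2)
      linarith
    have hkey : Real.log 2 + -(t ^ 2 / (4 * Q)) ≤ -c := by
      have hx2 : 1 ≤ x ^ 2 := by nlinarith [hx1]
      have hc2 : c ≤ c ^ 2 := by nlinarith [hc]
      have h4 : c + 1 ≤ 4 * c ^ 2 * x ^ 2 := by nlinarith [hx2, hc2, hc, sq_nonneg c]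
      linarith
    calc 2 * (k.choose s : ℝ) * Real.exp (-(t ^ 2 / (4 * Q)))
        = (k.choose s : ℝ) * (Real.exp (Real.log 2) * Real.exp (-(t ^ 2 / (4 * Q)))) := by
          rw [Real.exp_log (by norm_num : (0:ℝ) < 2)]; ring
      _ = (k.choose s : ℝ) * Real.exp (Real.log 2 + -(t ^ 2 / (4 * Q))) := by
          rw [Real.exp_add]
      _ ≤ (k.choose s : ℝ) * Real.exp (-c) := by
          exact mul_le_mul_of_nonneg_left (Real.exp_le_exp.mpr hkey) hNpos.le
      _ = Real.exp (-c) * (k.choose s : ℝ) := by ring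
end

section
/- Let D be a finite multi-set of integers and let k ≥ 1 be an integer. Partition D randomly into k² parts D_1, …, D_{k²} by assigning each element of D independently and uniformly at random to one of the k² parts. Then for every subset Z ⊆ D with |Z| = k, with probability at least 1/4 every part D_i contains at most one element of Z; consequently, with probability at least 1/4, σ(Z) ∈ (D_1 ∪ {0}) + (D_2 ∪ {0}) + ⋯ + (D_{k²} ∪ {0}), where each D_i is viewed as a set after removing duplicates. -/
/-!
A colouring of `D` into `k²` parts puts at most one element of `Z` in each part exactly when it
is injective on `Z`, and then `σ(Z)` is the sum over the parts of either `0` or the unique element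
of `Z` in that part. The proportion of colourings injective on `Z` is
`∏_{i<k} (1 - i/k²) ≥ 1 - C(k,2)/k² ≥ 1/2` (the birthday bound).
-/

open Pointwise Finset

section Colorings

variable {α β : Type*} [DecidableEq β]

theorem forall_card_filter_apply_eq_le_one_iff_injOn (c : α → β) (Z : Finset α) :
    (∀ i, #{j ∈ Z | c j = i} ≤ 1) ↔ Set.InjOn c Z := by
  refine ⟨fun h j hj j' hj' hjj' => ?_, fun h i => card_le_one.mpr fun j hj j' hj' => ?_⟩
  · exact card_le_one.mp (h (c j)) j (mem_filter.mpr ⟨hj, rfl⟩) j'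
      (mem_filter.mpr ⟨hj', hjj'.symm⟩)
  · rw [mem_filter] at hj hj'
    exact h hj.1 hj'.1 (hj.2.trans hj'.2.symm)

variable [Fintype α] [Fintype β]

theorem card_filter_injOn [DecidableEq α] (Z : Finset α)
    [DecidablePred fun c : α → β => Set.InjOn c Z] :
    #{c : α → β | Set.InjOn c Z} =
      (Fintype.card β).descFactorial #Z * Fintype.card β ^ (Fintype.card α - #Z) := by
  rw [← Fintype.card_subtype]
  let e : {c : α → β // Set.InjOn c Z} ≃
      {g : Z → β // Function.Injective g} × ({x // x ∉ Z} → β) :=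
    (Equiv.subtypeEquiv (Equiv.piEquivPiSubtypeProd (· ∈ Z) fun _ => β) fun _ =>
      Set.injOn_iff_injective).trans Equiv.prodSubtypeFstEquivSubtypeProd
  rw [Fintype.card_congr e, Fintype.card_prod, Fintype.card_fun,
    Fintype.card_congr (Equiv.subtypeInjectiveEquivEmbedding _ _), Fintype.card_embedding_eq,
    Fintype.card_subtype_compl, Fintype.card_coe]

theorem card_filter_injOn_div_card_univ [DecidableEq α] [Nonempty β] (Z : Finset α)
    [DecidablePred fun c : α → β => Set.InjOn c Z] :
    (#{c : α → β | Set.InjOn c Z} : ℝ) / #(univ : Finset (α → β)) =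
      (Fintype.card β).descFactorial #Z / (Fintype.card β : ℝ) ^ #Z := by
  obtain ⟨r, hr⟩ := Nat.exists_eq_add_of_le (card_le_univ Z)
  have hβ : (0 : ℝ) < Fintype.card β := Nat.cast_pos.mpr Fintype.card_pos
  rw [card_filter_injOn, card_univ, Fintype.card_fun, hr, Nat.add_sub_cancel_left, pow_add,
    Nat.cast_mul, Nat.cast_mul, Nat.cast_pow, Nat.cast_pow,
    mul_div_mul_right _ _ (by positivity)]

theorem sum_mem_sum_image_filter_union_zero {M : Type*} [AddCommMonoid M] [DecidableEq M]
    {c : α → β} {Z : Finset α} (hc : Set.InjOn c Z) (d : α → M) :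
    ∑ j ∈ Z, d j ∈ ∑ i, (({j | c j = i} : Finset α).image d ∪ {0}) := by
  rw [← sum_fiberwise Z c d, ← mem_coe, coe_sum]
  refine Set.finsetSum_mem_finsetSum _ _ _ fun i _ => ?_
  rcases Nat.le_one_iff_eq_zero_or_eq_one.mp
    ((forall_card_filter_apply_eq_le_one_iff_injOn c Z).mpr hc i) with h | h
  · simp [card_eq_zero.mp h]
  · obtain ⟨j, hj⟩ := card_eq_one.mp h
    have hcj : c j = i := (mem_filter.mp (hj ▸ mem_singleton_self j :
      j ∈ ({j ∈ Z | c j = i} : Finset α))).2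
    rw [hj, sum_singleton, mem_coe]
    exact mem_union_left _ (mem_image_of_mem d (by simpa using hcj))

end Colorings

theorem one_sub_sum_le_prod_one_sub {ι R : Type*} [CommRing R] [LinearOrder R]
    [IsStrictOrderedRing R] (s : Finset ι) {f : ι → R} (h0 : ∀ i ∈ s, 0 ≤ f i)
    (h1 : ∀ i ∈ s, f i ≤ 1) : 1 - ∑ i ∈ s, f i ≤ ∏ i ∈ s, (1 - f i) := by
  classical
  induction s using Finset.induction with
  | empty => simp
  | @insert a s ha ih =>
    rw [sum_insert ha, prod_insert ha]
    have hs := ih (fun i hi => h0 i (mem_insert_of_mem hi)) fun i hi => h1 i (mem_insert_of_mem hi)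
    have hsum : 0 ≤ ∑ i ∈ s, f i := sum_nonneg fun i hi => h0 i (mem_insert_of_mem hi)
    have hfa : 0 ≤ f a := h0 a (mem_insert_self a s)
    nlinarith [mul_le_mul_of_nonneg_left hs (sub_nonneg.mpr (h1 a (mem_insert_self a s)))]

theorem Nat.cast_descFactorial_div_pow_eq_prod {m k : ℕ} (hkm : k ≤ m) :
    (m.descFactorial k : ℝ) / m ^ k = ∏ i ∈ range k, (1 - (i : ℝ) / m) := by
  rw [descFactorial_eq_prod_range, Nat.cast_prod, pow_eq_prod_const, ← prod_div_distrib]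
  refine prod_congr rfl fun i hi => ?_
  have him : i < m := (mem_range.mp hi).trans_le hkm
  rw [Nat.cast_sub him.le, sub_div, div_self (Nat.cast_ne_zero.mpr (Nat.ne_zero_of_lt him))]

theorem one_sub_choose_two_div_le_descFactorial_div_pow {m k : ℕ} (hkm : k ≤ m) :
    1 - (k.choose 2 : ℝ) / m ≤ m.descFactorial k / m ^ k := by
  have hsum : ∑ i ∈ range k, (i : ℝ) / m = k.choose 2 / m := by
    rw [← sum_div, Nat.choose_two_right, ← sum_range_id, Nat.cast_sum]
  rw [Nat.cast_descFactorial_div_pow_eq_prod hkm, ← hsum]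
  refine one_sub_sum_le_prod_one_sub _ (fun i _ => by positivity) fun i hi => ?_
  exact div_le_one_of_le₀ (Nat.cast_le.mpr ((mem_range.mp hi).le.trans hkm)) (Nat.cast_nonneg m)

/-- Let `D` be a finite multiset (given as `d : Fin n → ℕ`) and `k ≥ 1`.
Partition `D` randomly into `k²` parts by assigning each element independently and
uniformly at random to one of the parts (a uniformly random coloring
`c : Fin n → Fin (k²)`). Then for every subset `Z ⊆ D` with `|Z| = k` (given as an index
set `Zidx` of size `k`), with probability at least `1/4` every part contains at most one
element of `Z`, and consequently
`σ(Z) ∈ (D₁ ∪ {0}) + ⋯ + (D_{k²} ∪ {0})` (each part viewed as a set). -/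
theorem stmt9 (n k : ℕ) (hk : 1 ≤ k) (d : Fin n → ℕ) (Zidx : Finset (Fin n))
    (hZ : Zidx.card = k) :
    (1 : ℝ) / 4 ≤
      ((((Finset.univ : Finset (Fin n → Fin (k ^ 2))).filter fun c =>
          (∀ i, (Zidx.filter fun j => c j = i).card ≤ 1) ∧
            (∑ j ∈ Zidx, d j) ∈
              ∑ i : Fin (k ^ 2),
                ((Finset.univ.filter fun j => c j = i).image d ∪ {0})).card : ℝ) /
        ((Finset.univ : Finset (Fin n → Fin (k ^ 2))).card : ℝ)) := by
  classical
  have hcollision : (k.choose 2 : ℝ) / (k ^ 2 : ℕ) ≤ 1 / 2 := by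
    rw [Nat.cast_pow, div_le_iff₀ (by positivity)]
    simpa [div_eq_inv_mul] using Nat.choose_le_pow_div (α := ℝ) 2 k
  have hbirthday := one_sub_choose_two_div_le_descFactorial_div_pow (Nat.le_self_pow two_ne_zero k)
  have hseparating : ∀ c : Fin n → Fin (k ^ 2), ((∀ i, #{j ∈ Zidx | c j = i} ≤ 1) ∧
      ∑ j ∈ Zidx, d j ∈ ∑ i, (({j | c j = i} : Finset (Fin n)).image d ∪ {0})) ↔
      Set.InjOn c Zidx := fun c =>
    (and_iff_left_of_imp fun hc => sum_mem_sum_image_filter_union_zero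
      ((forall_card_filter_apply_eq_le_one_iff_injOn c Zidx).mp hc) d).trans
      (forall_card_filter_apply_eq_le_one_iff_injOn c Zidx)
  have : NeZero (k ^ 2) := ⟨by positivity⟩
  rw [filter_congr fun c _ => hseparating c, card_filter_injOn_div_card_univ, hZ, Fintype.card_fin]
  linarith
end

section
/- Let w ≥ 2 be an integer, let α > 0 be a real, and let X be a finite multi-set of integers from [1, w]. If X has no α-almost divisor, then there exists a sub-multi-set R ⊆ X such that |R| ≤ 4α·log w and, for every integer d with 1 < d ≤ α, at least d elements of R are not divisible by d (i.e., |R \ R(d)| ≥ d). -/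
/-!
Put `T = ⌊α⌋` and let `B` be the set of primes `q ≤ T`. Every `d ∈ (1, α]` has its least prime
factor in `B`, so it suffices to find `R ⊆ X` in which every `q ∈ B` has at least `T`
non-multiples. Start from any `T` elements of `X`. An integer `x ≤ w` has at most `log w` prime
factors, so these elements fall short of the requirement by at most `T log w` in total. Since
every `q` has more than `α ≥ T` non-multiples in `X`, each unit of shortfall can be repaired by
adding a single element of `X`. Hence `|R| ≤ T (1 + log w) ≤ 2 α log w`.
-/

theorem Nat.card_filter_prime_dvd_le_log {P : Finset ℕ} (hP : ∀ p ∈ P, p.Prime) {x : ℕ}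
    (hx : x ≠ 0) : (P.filter (· ∣ x)).card ≤ Nat.log 2 x := by
  have hsub : P.filter (· ∣ x) ⊆ x.primeFactors := fun p hp => by
    rw [Finset.mem_filter] at hp
    exact Nat.mem_primeFactors.2 ⟨hP p hp.1, hp.2, hx⟩
  have hpow : 2 ^ x.primeFactors.card ≤ x :=
    calc 2 ^ x.primeFactors.card ≤ ∏ p ∈ x.primeFactors, p :=
          Finset.pow_card_le_prod _ _ _ fun p hp => (Nat.prime_of_mem_primeFactors hp).two_le
      _ ≤ x := Nat.le_of_dvd (Nat.pos_of_ne_zero hx) (Nat.prod_primeFactors_dvd x)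
  exact (Finset.card_le_card hsub).trans ((Nat.le_log_iff_pow_le one_lt_two hx).2 hpow)

namespace Multiset

variable {α : Type*}

theorem exists_le_card_eq {X : Multiset α} {n : ℕ} (h : n ≤ card X) :
    ∃ Y ≤ X, card Y = n := by
  obtain ⟨Y, hY⟩ := card_pos_iff_exists_mem.1
    ((card_powersetCard n X).symm ▸ Nat.choose_pos h)
  exact ⟨Y, mem_powersetCard.1 hY⟩

theorem exists_cons_le_of_countP_lt [DecidableEq α] {p : α → Prop} [DecidablePred p]
    {R X : Multiset α} (hRX : R ≤ X) (h : R.countP p < X.countP p) :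
    ∃ y, p y ∧ y ::ₘ R ≤ X := by
  obtain ⟨y, hy, hpy⟩ : ∃ y ∈ X - R, p y := by
    rw [← countP_pos, countP_sub hRX]
    omega
  refine ⟨y, hpy, ?_⟩
  rw [← singleton_add, ← le_tsub_iff_right hRX]
  exact singleton_le.2 hy

theorem sum_countP_le_card_mul {ι : Type*} (S : Finset ι) (p : ι → α → Prop)
    [∀ i, DecidablePred (p i)] {Y : Multiset α} {L : ℕ}
    (hY : ∀ y ∈ Y, (S.filter fun i => p i y).card ≤ L) :
    ∑ i ∈ S, Y.countP (p i) ≤ card Y * L := by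
  induction Y using Multiset.induction_on with
  | empty => simp
  | cons y Y ih =>
    rw [card_cons, add_one_mul]
    simp only [countP_cons, Finset.sum_add_distrib, Finset.sum_boole, Nat.cast_id]
    exact add_le_add (ih fun z hz => hY z (mem_cons_of_mem hz)) (hY y (mem_cons_self y Y))

theorem exists_le_countP_ge [DecidableEq α] {ι : Type*} (S : Finset ι) (p : ι → α → Prop)
    [∀ i, DecidablePred (p i)] {X : Multiset α} {t : ℕ} (hX : ∀ i ∈ S, t ≤ X.countP (p i))
    {R : Multiset α} (hRX : R ≤ X) :
    ∃ R', R ≤ R' ∧ R' ≤ X ∧ card R' ≤ card R + ∑ i ∈ S, (t - R.countP (p i)) ∧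
      ∀ i ∈ S, t ≤ R'.countP (p i) := by
  induction hn : ∑ i ∈ S, (t - R.countP (p i)) using Nat.strong_induction_on generalizing R with
  | _ n ih =>
    by_cases hdone : ∀ i ∈ S, t ≤ R.countP (p i)
    · exact ⟨R, le_rfl, hRX, Nat.le_add_right _ _, hdone⟩
    obtain ⟨i, hi, hRi⟩ : ∃ i ∈ S, R.countP (p i) < t := by simpa using hdone
    obtain ⟨y, hy, hyR⟩ := exists_cons_le_of_countP_lt hRX (hRi.trans_le (hX i hi))
    have hdeficit : ∑ j ∈ S, (t - (y ::ₘ R).countP (p j)) < ∑ j ∈ S, (t - R.countP (p j)) := by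
      refine Finset.sum_lt_sum
        (fun j _ => Nat.sub_le_sub_left (countP_le_of_le _ (le_cons_self R y)) t) ⟨i, hi, ?_⟩
      rw [countP_cons_of_pos _ hy]
      omega
    obtain ⟨R', hyR', hR'X, hcard, hR'⟩ := ih _ (hn ▸ hdeficit) hyR rfl
    refine ⟨R', (le_cons_self R y).trans hyR', hR'X, ?_, hR'⟩
    rw [card_cons] at hcard
    omega

end Multiset

theorem exists_le_card_le_countP_not_dvd (X : Multiset ℕ) {w T : ℕ}
    (hX : ∀ x ∈ X, x ∈ Finset.Icc 1 w) (hT : ∀ d, 1 < d → T ≤ X.countP (¬ d ∣ ·)) :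
    ∃ R ≤ X, Multiset.card R ≤ T * (1 + Nat.log 2 w) ∧
      ∀ d, 1 < d → d ≤ T → d ≤ R.countP (¬ d ∣ ·) := by
  classical
  set B := (Finset.Icc 2 T).filter Nat.Prime
  have hB : ∀ q ∈ B, T ≤ X.countP (¬ q ∣ ·) := fun q hq =>
    hT q (Finset.mem_Icc.1 (Finset.mem_filter.1 hq).1).1
  obtain ⟨Y, hYX, hY⟩ :=
    Multiset.exists_le_card_eq ((hT 2 one_lt_two).trans (Multiset.countP_le_card _ _))
  obtain ⟨R, -, hRX, hcard, hR⟩ := Multiset.exists_le_countP_ge B (fun q x => ¬ q ∣ x) hB hYX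
  have hdeficit : ∑ q ∈ B, (T - Y.countP (¬ q ∣ ·)) ≤ T * Nat.log 2 w :=
    calc ∑ q ∈ B, (T - Y.countP (¬ q ∣ ·)) ≤ ∑ q ∈ B, Y.countP (q ∣ ·) :=
          Finset.sum_le_sum fun q _ => by
            rw [← hY, Multiset.card_eq_countP_add_countP (q ∣ ·) Y]
            omega
      _ ≤ Multiset.card Y * Nat.log 2 w :=
          Multiset.sum_countP_le_card_mul B (· ∣ ·) fun y hy => by
            have hyw := Finset.mem_Icc.1 (hX y (Multiset.mem_of_le hYX hy))
            exact (Nat.card_filter_prime_dvd_le_log (fun q hq => (Finset.mem_filter.1 hq).2)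
              (by omega)).trans (Nat.log_mono_right hyw.2)
      _ = T * Nat.log 2 w := by rw [hY]
  refine ⟨R, hRX, by rw [mul_one_add]; omega, fun d hd hdT => ?_⟩
  have hp : d.minFac.Prime := Nat.minFac_prime hd.ne'
  have hpB : d.minFac ∈ B :=
    Finset.mem_filter.2 ⟨Finset.mem_Icc.2 ⟨hp.two_le, (Nat.minFac_le (by omega)).trans hdT⟩, hp⟩
  calc d ≤ T := hdT
    _ ≤ R.countP (¬ d.minFac ∣ ·) := hR _ hpB
    _ ≤ R.countP (¬ d ∣ ·) := by
      simp only [Multiset.countP_eq_card_filter]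
      exact Multiset.card_le_card (Multiset.monotone_filter_right R
        fun x hx hdx => hx ((Nat.minFac_dvd d).trans hdx))

/-- Let `w ≥ 2`, `α > 0`, and let `X` be a multiset of integers from
`[1, w]`. If `X` has no `α`-almost divisor (i.e., for every integer `d > 1`, more than
`α` elements of `X` are not divisible by `d`), then there is a sub-multiset `R ⊆ X` with
`|R| ≤ 4α log w` such that for every integer `d` with `1 < d ≤ α`, at least `d` elements
of `R` are not divisible by `d`. -/
theorem stmt11 (w : ℕ) (hw : 2 ≤ w) (α : ℝ) (hα : 0 < α) (X : Multiset ℕ)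
    (hX : ∀ x ∈ X, x ∈ Finset.Icc 1 w)
    (hnoad : ∀ d : ℕ, 1 < d → α < ((X.filter fun x => ¬ d ∣ x).card : ℝ)) :
    ∃ R ≤ X, (Multiset.card R : ℝ) ≤ 4 * α * Real.logb 2 w ∧
      ∀ d : ℕ, 1 < d → (d : ℝ) ≤ α →
        d ≤ (R.filter fun x => ¬ d ∣ x).card := by
  obtain ⟨R, hRX, hcard, hR⟩ := exists_le_card_le_countP_not_dvd X (T := ⌊α⌋₊) hX fun d hd => by
    rw [Multiset.countP_eq_card_filter]
    exact Nat.floor_le_of_le (hnoad d hd).le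
  have hlog : (1 : ℝ) ≤ Real.logb 2 w := by
    rw [Real.le_logb_iff_rpow_le one_lt_two (by positivity), Real.rpow_one]
    exact_mod_cast hw
  have hnatLog : (Nat.log 2 w : ℝ) ≤ Real.logb 2 w := by exact_mod_cast Real.natLog_le_logb w 2
  refine ⟨R, hRX, ?_, fun d hd hdα => by
    simpa only [Multiset.countP_eq_card_filter] using hR d hd (Nat.le_floor hdα)⟩
  calc (Multiset.card R : ℝ) ≤ ⌊α⌋₊ * (1 + Nat.log 2 w) := by exact_mod_cast hcard
    _ ≤ α * (2 * Real.logb 2 w) := by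
      gcongr
      · exact Nat.floor_le hα.le
      · linarith
    _ ≤ 4 * α * Real.logb 2 w := by nlinarith
end

section
/- Let w ≥ 2 be an integer, let α > 0 be a real, and let X be a finite multi-set of integers from [1, w]. If X has no α-almost divisor, then there exists a sub-multi-set R ⊆ X such that |R| ≤ 4α·log w and, for every integer d with 1 < d ≤ α, S(R) mod d = [0, d−1], i.e., every residue modulo d is realized by some subset sum of R. -/
lemma stab_lemma (d : ℕ) (hd : 1 < d) (S : Finset (ZMod d)) (hS : S.Nonempty)
    (hSne : ∃ c : ZMod d, c ∉ S) :
    ∃ p : ℕ, p.Prime ∧ p ∣ d ∧ ∀ y : ℕ, ¬ (p ∣ y) → S.image (· + (y : ZMod d)) ≠ S := by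
  haveI : NeZero d := ⟨by omega⟩
  set H : AddSubgroup (ZMod d) :=
    { carrier := {h | S.image (· + h) = S}
      zero_mem' := by
        simp only [Set.mem_setOf_eq]
        have : (· + (0:ZMod d)) = (id : ZMod d → ZMod d) := by funext x; simp
        rw [this, Finset.image_id]
      add_mem' := by
        intro a b ha hb
        simp only [Set.mem_setOf_eq] at *
        have : S.image (· + (a + b)) = (S.image (· + a)).image (· + b) := by
          rw [Finset.image_image]
          apply Finset.image_congr
          intro x _
          simp [add_assoc]
        rw [this, ha, hb]
      neg_mem' := by
        intro a ha
        simp only [Set.mem_setOf_eq] at *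
        conv_lhs => rw [← ha]
        rw [Finset.image_image]
        have : ((· + (-a)) ∘ (· + a)) = id := by funext x; simp
        rw [this, Finset.image_id] } with hH
  have hmem : ∀ h : ZMod d, h ∈ H ↔ S.image (· + h) = S := fun h => Iff.rfl
  have hHtop : H ≠ ⊤ := by
    intro htop
    obtain ⟨c, hc⟩ := hSne
    obtain ⟨s₀, hs₀⟩ := hS
    apply hc
    have : S.image (· + (c - s₀)) = S := (hmem _).mp (htop ▸ AddSubgroup.mem_top _)
    rw [← this]
    exact Finset.mem_image.mpr ⟨s₀, hs₀, by ring⟩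
  have hcard : Nat.card H ∣ d := by
    simpa [Nat.card_zmod] using AddSubgroup.card_addSubgroup_dvd_card H
  have hne0 : Nat.card H ≠ 0 := Nat.card_pos.ne'
  set e := d / Nat.card H with he
  have hde : d = Nat.card H * e := (Nat.mul_div_cancel' hcard).symm
  have he1 : 1 < e := by
    rcases Nat.lt_or_ge e 2 with h | h
    · interval_cases e
      · omega
      · exfalso
        apply hHtop
        apply AddSubgroup.eq_top_of_card_eq
        simp [Nat.card_zmod]; omega
    · omega
  refine ⟨e.minFac, Nat.minFac_prime (by omega), e.minFac_dvd.trans ⟨Nat.card H, by rw [Nat.mul_comm]; exact hde⟩, ?_⟩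
  intro y hy hmemy
  apply hy
  have hyH : (y : ZMod d) ∈ H := (hmem _).mpr hmemy
  have h1 : addOrderOf (y : ZMod d) ∣ Nat.card H :=
    AddSubgroup.addOrderOf_dvd_natCard H hyH
  rw [ZMod.addOrderOf_coe y (NeZero.ne d)] at h1
  set g := d.gcd y with hg
  have hgd : g ∣ d := Nat.gcd_dvd_left _ _
  have hgy : g ∣ y := Nat.gcd_dvd_right _ _
  have hg0 : 0 < g := Nat.gcd_pos_of_pos_left _ (by omega)
  obtain ⟨c, hc⟩ := h1
  have hdg : d = g * (d / g) := (Nat.mul_div_cancel' hgd).symm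
  have hdg0 : 0 < d / g := Nat.div_pos (Nat.le_of_dvd (by omega) hgd) hg0
  have heg : e ∣ g := by
    have h2 : (d / g) * g = (d / g) * (c * e) := by
      calc (d / g) * g = d := Nat.div_mul_cancel hgd
        _ = Nat.card H * e := hde
        _ = (d / g) * c * e := by rw [hc]
        _ = (d / g) * (c * e) := by ring
    have : g = c * e := Nat.eq_of_mul_eq_mul_left hdg0 h2
    exact ⟨c, by rw [this, Nat.mul_comm]⟩
  exact (e.minFac_dvd.trans heg).trans hgy

lemma cover_aux (d : ℕ) (hd : 1 < d) :
    ∀ (k : ℕ) (S : Finset (ZMod d)) (Y : Multiset ℕ), S.Nonempty → d ≤ S.card + k →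
      (∀ p : ℕ, p.Prime → p ∣ d → k ≤ Multiset.card (Y.filter (fun x => ¬ p ∣ x))) →
      ∀ c : ZMod d, ∃ s ∈ S, ∃ Z ≤ Y, s + (Z.sum : ZMod d) = c := by
  haveI : NeZero d := ⟨by omega⟩
  intro k
  induction k with
  | zero =>
    intro S Y hS hcard _ c
    have huniv : S = Finset.univ := by
      apply Finset.eq_univ_of_card
      have h1 : S.card ≤ Fintype.card (ZMod d) := Finset.card_le_univ S
      have h2 : Fintype.card (ZMod d) = d := ZMod.card d
      omega
    exact ⟨c, by rw [huniv]; exact Finset.mem_univ c, 0, le_refl _ |>.trans (Multiset.zero_le Y), by simp⟩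
  | succ k ih =>
    intro S Y hS hcard hcnt c
    by_cases hfull : ∀ c' : ZMod d, c' ∈ S
    · exact ⟨c, hfull c, 0, Multiset.zero_le Y, by simp⟩
    push_neg at hfull
    obtain ⟨p, hp, hpd, hstab⟩ := stab_lemma d hd S hS hfull
    have hy : ∃ y ∈ Y, ¬ p ∣ y := by
      have h1 : 0 < Multiset.card (Y.filter (fun x => ¬ p ∣ x)) := by
        have := hcnt p hp hpd; omega
      obtain ⟨y, hy⟩ := Multiset.card_pos_iff_exists_mem.mp h1
      exact ⟨y, (Multiset.mem_filter.mp hy).1, (Multiset.mem_filter.mp hy).2⟩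
    obtain ⟨y, hyY, hpy⟩ := hy
    set S' := S ∪ S.image (· + (y : ZMod d)) with hS'
    have himg_card : (S.image (· + (y : ZMod d))).card = S.card :=
      Finset.card_image_of_injective S (add_left_injective _)
    have hex : ∃ t ∈ S.image (· + (y : ZMod d)), t ∉ S := by
      by_contra h
      push_neg at h
      exact hstab y hpy (Finset.eq_of_subset_of_card_le h (by omega))
    obtain ⟨t, htimg, htS⟩ := hex
    have hcard' : S.card + 1 ≤ S'.card := by
      have h1 : insert t S ⊆ S' := by
        intro a ha
        rcases Finset.mem_insert.mp ha with h | h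
        · exact Finset.mem_union_right _ (h ▸ htimg)
        · exact Finset.mem_union_left _ h
      calc S.card + 1 = (insert t S).card := (Finset.card_insert_of_notMem htS).symm
        _ ≤ S'.card := Finset.card_le_card h1
    have hYerase : ∀ q : ℕ, q.Prime → q ∣ d →
        k ≤ Multiset.card ((Y.erase y).filter (fun x => ¬ q ∣ x)) := by
      intro q hq hqd
      have h1 : Y = y ::ₘ Y.erase y := (Multiset.cons_erase hyY).symm
      have h2 : k + 1 ≤ Multiset.card (Y.filter (fun x => ¬ q ∣ x)) := hcnt q hq hqd
      rw [h1, Multiset.filter_cons] at h2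
      rw [Multiset.card_add] at h2
      have h3 : Multiset.card (if ¬ q ∣ y then ({y} : Multiset ℕ) else 0) ≤ 1 := by
        split <;> simp
      omega
    have hrec := ih S' (Y.erase y) ⟨hS.choose, Finset.mem_union_left _ hS.choose_spec⟩
        (by omega) hYerase c
    obtain ⟨s', hs', Z, hZ, hsum⟩ := hrec
    rcases Finset.mem_union.mp hs' with h | h
    · exact ⟨s', h, Z, hZ.trans (Multiset.erase_le y Y), hsum⟩
    · obtain ⟨s, hsS, hst⟩ := Finset.mem_image.mp h
      refine ⟨s, hsS, y ::ₘ Z, ?_, ?_⟩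
      · have := Multiset.cons_le_cons y hZ
        rwa [Multiset.cons_erase hyY] at this
      · have hst' : s + (y : ZMod d) = s' := hst
        rw [Multiset.sum_cons, Nat.cast_add, ← hsum, ← hst']
        ring


/-- count of elements of R not divisible by p -/
def cnt (p : ℕ) (R : Multiset ℕ) : ℕ := Multiset.card (R.filter (fun x => ¬ p ∣ x))

lemma cnt_mono (p : ℕ) {R R' : Multiset ℕ} (h : R ≤ R') : cnt p R ≤ cnt p R' :=
  Multiset.card_le_card (Multiset.filter_le_filter _ h)

lemma cnt_cons_of_not_dvd {p x : ℕ} (hx : ¬ p ∣ x) (R : Multiset ℕ) :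
    cnt p (x ::ₘ R) = cnt p R + 1 := by
  unfold cnt
  rw [Multiset.filter_cons_of_pos (p := fun y => ¬ p ∣ y) R hx]
  simp

lemma cons_le_of_mem_sub {X R : Multiset ℕ} (hR : R ≤ X) {x : ℕ} (hx : x ∈ X - R) :
    x ::ₘ R ≤ X := by
  rw [Multiset.le_iff_count]
  intro a
  have h1 : Multiset.count a R ≤ Multiset.count a X := Multiset.count_le_of_le a hR
  have h2 : 0 < Multiset.count x (X - R) := Multiset.count_pos.mpr hx
  rw [Multiset.count_sub] at h2
  rw [Multiset.count_cons]
  by_cases hax : a = x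
  · subst hax; simp; omega
  · simp [hax]; omega

lemma exists_new {X R : Multiset ℕ} (hR : R ≤ X) {p m : ℕ} (hX : m + 1 ≤ cnt p X)
    (hRm : cnt p R ≤ m) : ∃ x, x ∈ X - R ∧ ¬ p ∣ x := by
  have h1 : X = (X - R) + R := (tsub_add_cancel_of_le hR).symm
  have h2 : cnt p X = cnt p (X - R) + cnt p R := by
    conv_lhs => rw [h1]
    unfold cnt
    rw [Multiset.filter_add, Multiset.card_add]
  have h3 : 0 < cnt p (X - R) := by omega
  obtain ⟨x, hx⟩ := Multiset.card_pos_iff_exists_mem.mp h3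
  exact ⟨x, (Multiset.mem_filter.mp hx).1, (Multiset.mem_filter.mp hx).2⟩

lemma fill (X : Multiset ℕ) (m : ℕ) (U : Finset ℕ)
    (hU : ∀ p ∈ U, m + 1 ≤ cnt p X) :
    ∀ R : Multiset ℕ, R ≤ X → (∀ p ∈ U, m ≤ cnt p R) →
    ∃ R', R ≤ R' ∧ R' ≤ X ∧ Multiset.card R' ≤ Multiset.card R + U.card ∧
      ∀ p ∈ U, m + 1 ≤ cnt p R' := by
  induction U using Finset.induction_on with
  | empty => exact fun R hRX _ => ⟨R, le_refl R, hRX, by simp, by simp⟩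
  | @insert p U' hp ih =>
    intro R hRX hRm
    have hU' : ∀ q ∈ U', m + 1 ≤ cnt q X := fun q hq => hU q (Finset.mem_insert_of_mem hq)
    by_cases h : m + 1 ≤ cnt p R
    · obtain ⟨R', hRR', hR'X, hcard, hfin⟩ := ih hU' R hRX
        (fun q hq => hRm q (Finset.mem_insert_of_mem hq))
      refine ⟨R', hRR', hR'X, ?_, ?_⟩
      · rw [Finset.card_insert_of_notMem hp]; omega
      · intro q hq
        rcases Finset.mem_insert.mp hq with rfl | hq'
        · exact h.trans (cnt_mono q hRR')
        · exact hfin q hq'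
    · push_neg at h
      obtain ⟨x, hxmem, hxp⟩ := exists_new hRX (hU p (Finset.mem_insert_self p U')) (by omega)
      have hR1X : x ::ₘ R ≤ X := cons_le_of_mem_sub hRX hxmem
      have hR1m : ∀ q ∈ U', m ≤ cnt q (x ::ₘ R) :=
        fun q hq => (hRm q (Finset.mem_insert_of_mem hq)).trans
          (cnt_mono q (Multiset.le_cons_self R x))
      obtain ⟨R', hRR', hR'X, hcard, hfin⟩ := ih hU' (x ::ₘ R) hR1X hR1m
      refine ⟨R', (Multiset.le_cons_self R x).trans hRR', hR'X, ?_, ?_⟩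
      · rw [Finset.card_insert_of_notMem hp]
        rw [Multiset.card_cons] at hcard
        omega
      · intro q hq
        rcases Finset.mem_insert.mp hq with rfl | hq'
        · have h1 : cnt q (x ::ₘ R) = cnt q R + 1 := cnt_cons_of_not_dvd hxp R
          have h2 : m ≤ cnt q R := hRm q (Finset.mem_insert_self q U')
          have := cnt_mono q hRR'
          omega
        · exact hfin q hq'

lemma roundLem (X : Multiset ℕ) (L m : ℕ)
    (hxX : ∀ x ∈ X, 1 ≤ x ∧ x.primeFactors.card ≤ L)
    (P : Finset ℕ) (hP : ∀ p ∈ P, p.Prime)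
    (hPX : ∀ p ∈ P, m + 1 ≤ cnt p X)
    (R : Multiset ℕ) (hRX : R ≤ X) (hRm : ∀ p ∈ P, m ≤ cnt p R) :
    ∃ R', R ≤ R' ∧ R' ≤ X ∧ Multiset.card R' ≤ Multiset.card R + (L + 1) ∧
      ∀ p ∈ P, m + 1 ≤ cnt p R' := by
  by_cases hdone : ∀ p ∈ P, m + 1 ≤ cnt p R
  · exact ⟨R, le_refl R, hRX, by omega, hdone⟩
  push_neg at hdone
  obtain ⟨p₀, hp₀P, hp₀⟩ := hdone
  obtain ⟨x, hxmem, hxp⟩ := exists_new hRX (hPX p₀ hp₀P) (by omega)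
  have hxX' : x ∈ X := Multiset.mem_of_le (tsub_le_self) hxmem
  have hR1X : x ::ₘ R ≤ X := cons_le_of_mem_sub hRX hxmem
  set U : Finset ℕ := P.filter (fun p => cnt p (x ::ₘ R) ≤ m) with hUdef
  have hUsub : U ⊆ x.primeFactors := by
    intro q hq
    obtain ⟨hqP, hqc⟩ := Finset.mem_filter.mp hq
    by_cases hqx : q ∣ x
    · exact Nat.mem_primeFactors.mpr ⟨hP q hqP, hqx, by have := (hxX x hxX').1; omega⟩
    · exfalso
      have h1 : cnt q (x ::ₘ R) = cnt q R + 1 := cnt_cons_of_not_dvd hqx R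
      have h2 : m ≤ cnt q R := hRm q hqP
      omega
  have hUcard : U.card ≤ L := le_trans (Finset.card_le_card hUsub) (hxX x hxX').2
  obtain ⟨R', hRR', hR'X, hcard, hfin⟩ := fill X m U
    (fun q hq => hPX q (Finset.mem_filter.mp hq).1) (x ::ₘ R) hR1X
    (fun q hq => (hRm q (Finset.mem_filter.mp hq).1).trans (cnt_mono q (Multiset.le_cons_self R x)))
  refine ⟨R', (Multiset.le_cons_self R x).trans hRR', hR'X, ?_, ?_⟩
  · rw [Multiset.card_cons] at hcard
    omega
  · intro q hqP
    by_cases hq : q ∈ U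
    · exact hfin q hq
    · have : ¬ cnt q (x ::ₘ R) ≤ m := fun hc => hq (Finset.mem_filter.mpr ⟨hqP, hc⟩)
      push_neg at this
      exact le_trans this (cnt_mono q hRR')

lemma build (X : Multiset ℕ) (L : ℕ)
    (hxX : ∀ x ∈ X, 1 ≤ x ∧ x.primeFactors.card ≤ L)
    (P : Finset ℕ) (hP : ∀ p ∈ P, p.Prime) :
    ∀ m : ℕ, (∀ p ∈ P, m ≤ cnt p X) →
    ∃ R, R ≤ X ∧ Multiset.card R ≤ m * (L + 1) ∧ ∀ p ∈ P, m ≤ cnt p R := by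
  intro m
  induction m with
  | zero => exact fun _ => ⟨0, Multiset.zero_le X, by simp, by simp⟩
  | succ m ih =>
    intro hm
    obtain ⟨R, hRX, hcard, hRm⟩ := ih (fun p hp => le_trans (Nat.le_succ m) (hm p hp))
    obtain ⟨R', _, hR'X, hcard', hfin⟩ := roundLem X L m hxX P hP hm R hRX hRm
    exact ⟨R', hR'X, by rw [Nat.succ_mul]; omega, hfin⟩

lemma cover_s12 (d : ℕ) (hd : 1 < d) (R : Multiset ℕ)
    (h : ∀ p : ℕ, p.Prime → p ∣ d → d - 1 ≤ cnt p R) :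
    (fun s => s % d) '' subsetSums R = Set.Iio d := by
  haveI : NeZero d := ⟨by omega⟩
  ext t
  simp only [Set.mem_image, Set.mem_Iio, subsetSums, Set.mem_setOf_eq]
  constructor
  · rintro ⟨s, _, rfl⟩; exact Nat.mod_lt _ (by omega)
  · intro ht
    have hrec := cover_aux d hd (d-1) {0} R ⟨0, Finset.mem_singleton_self 0⟩
      (by simp; omega) (fun p hp hpd => h p hp hpd) ((t : ZMod d))
    obtain ⟨s, hs, Z, hZR, hsum⟩ := hrec
    rw [Finset.mem_singleton] at hs
    subst hs
    rw [zero_add] at hsum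
    refine ⟨Z.sum, ⟨Z, hZR, rfl⟩, ?_⟩
    have hmod : Z.sum % d = t % d := (ZMod.natCast_eq_natCast_iff _ _ _).mp hsum
    rw [hmod, Nat.mod_eq_of_lt ht]

/-- Let `w ≥ 2`, `α > 0`, and let `X` be a multiset of integers from
`[1, w]`. If `X` has no `α`-almost divisor (i.e., for every integer `d > 1`, more than
`α` elements of `X` are not divisible by `d`), then there is a sub-multiset `R ⊆ X` with
`|R| ≤ 4α log w` such that for every integer `d` with `1 < d ≤ α`, every residue modulo
`d` is realized by some subset sum of `R`. -/
theorem stmt12 (w : ℕ) (hw : 2 ≤ w) (α : ℝ) (hα : 0 < α) (X : Multiset ℕ)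
    (hX : ∀ x ∈ X, x ∈ Finset.Icc 1 w)
    (hnoad : ∀ d : ℕ, 1 < d → α < ((X.filter fun x => ¬ d ∣ x).card : ℝ)) :
    ∃ R ≤ X, (Multiset.card R : ℝ) ≤ 4 * α * Real.logb 2 w ∧
      ∀ d : ℕ, 1 < d → (d : ℝ) ≤ α →
        (fun s => s % d) '' subsetSums R = Set.Iio d := by
  set L := Nat.log 2 w with hLdef
  have hL1 : 1 ≤ L := Nat.le_log_of_pow_le (by norm_num) (by simpa using hw)
  have hLw : 2 ^ L ≤ w := Nat.pow_log_le_self 2 (by omega)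
  have hLlogb : (L : ℝ) ≤ Real.logb 2 w := by
    have h1 : ((2:ℝ)) ^ L ≤ (w:ℝ) := by exact_mod_cast hLw
    calc (L : ℝ) = Real.logb 2 ((2:ℝ) ^ L) := by
          rw [Real.logb_pow, Real.logb_self_eq_one] <;> norm_num
      _ ≤ Real.logb 2 w := Real.logb_le_logb_of_le (by norm_num) (by positivity) h1
  have hlogb1 : (1:ℝ) ≤ Real.logb 2 w := le_trans (by exact_mod_cast hL1) hLlogb
  by_cases hα2 : α < 2
  · refine ⟨0, Multiset.zero_le X, ?_, ?_⟩
    · simp only [Multiset.card_zero, Nat.cast_zero]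
      positivity
    · intro d hd hdα
      exfalso
      have : (2:ℝ) ≤ (d:ℝ) := by exact_mod_cast hd
      linarith
  · push_neg at hα2
    set m := Nat.floor α + 1 with hmdef
    set P := (Finset.range m).filter Nat.Prime with hPdef
    have hP : ∀ p ∈ P, p.Prime := fun p hp => (Finset.mem_filter.mp hp).2
    have hxX : ∀ x ∈ X, 1 ≤ x ∧ x.primeFactors.card ≤ L := by
      intro x hx
      obtain ⟨hx1, hxw⟩ := Finset.mem_Icc.mp (hX x hx)
      refine ⟨hx1, ?_⟩
      have h1 : 2 ^ x.primeFactors.card ≤ ∏ p ∈ x.primeFactors, p :=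
        Finset.pow_card_le_prod _ _ _ (fun p hp => (Nat.prime_of_mem_primeFactors hp).two_le)
      have h2 : ∏ p ∈ x.primeFactors, p ≤ x :=
        Nat.le_of_dvd (by omega) (Nat.prod_primeFactors_dvd x)
      have h3 : x.primeFactors.card ≤ Nat.log 2 x :=
        Nat.le_log_of_pow_le (by norm_num) (by omega)
      exact h3.trans (Nat.log_mono_right hxw)
    have hPX : ∀ p ∈ P, m ≤ cnt p X := by
      intro p hp
      have hp2 : 1 < p := (hP p hp).one_lt
      have := hnoad p hp2
      have hfl : Nat.floor α < (X.filter fun x => ¬ p ∣ x).card :=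
        (Nat.floor_lt hα.le).mpr this
      unfold cnt
      omega
    obtain ⟨R, hRX, hcard, hRm⟩ := build X L hxX P hP m hPX
    refine ⟨R, hRX, ?_, ?_⟩
    · rw [hmdef] at hcard
      have h2 : ((Multiset.card R : ℕ) : ℝ) ≤ (((⌊α⌋₊ + 1) * (L+1) : ℕ) : ℝ) := by
        exact_mod_cast hcard
      push_cast at h2
      have hm : ((⌊α⌋₊ : ℝ) + 1) ≤ α + 1 := by
        have := Nat.floor_le hα.le
        linarith
      have h1L : (1:ℝ) ≤ (L:ℝ) := by exact_mod_cast hL1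
      have hL' : (L : ℝ) + 1 ≤ 2 * Real.logb 2 w := by linarith
      have h3 : ((⌊α⌋₊ : ℝ) + 1) * ((L:ℝ) + 1) ≤ (α + 1) * (2 * Real.logb 2 w) :=
        mul_le_mul hm hL' (by positivity) (by linarith)
      nlinarith [mul_le_mul_of_nonneg_right (show (1:ℝ) ≤ α by linarith)
        (show (0:ℝ) ≤ 2 * Real.logb 2 w by linarith)]
    · intro d hd hdα
      apply cover_s12 d hd R
      intro p hp hpd
      have hpP : p ∈ P := by
        rw [hPdef, Finset.mem_filter, Finset.mem_range]
        have hpled : p ≤ d := Nat.le_of_dvd (by omega) hpd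
        have hdfl : d ≤ Nat.floor α := Nat.le_floor hdα
        exact ⟨by omega, hp⟩
      have h1 := hRm p hpP
      have hdfl : d ≤ Nat.floor α := Nat.le_floor hdα
      omega
end

section
/- Let n ≥ 1, w ≥ 2, and t ≥ 1 be integers, let 0 < q < 1 be a real, and set g = 72·log²(2n/q). Let D be a finite multi-set of integers from [1, w], partitioned into nonempty multi-sets D_1, …, D_ℓ with 2 ≤ ℓ ≤ 2n, such that for each integer j with 0 ≤ j ≤ ⌈log w⌉, at most t/2^{j−1} of the sets D_i satisfy 2^j ≤ max(D_i) < 2^{j+1}. For each i, let S_i ⊆ S(D_i) be a set with max(S_i) ≤ g·max(D_i). Let D' be the union of s of the sets D_i, chosen uniformly at random without replacement (0 ≤ s ≤ ℓ). Then for every subset Z ⊆ D such that σ(Z ∩ D_i) ∈ S_i for every i, Pr[ |σ(Z ∩ D') − (s/ℓ)·σ(Z)| > 2304·√(wt)·log²w·log³(2n/q) ] ≤ q/(2n). -/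
lemma exp_le_quad {u : ℝ} (hu : |u| ≤ 1) : Real.exp u ≤ 1 + u + u ^ 2 := by
  have h := Real.exp_bound hu (n := 2) (by norm_num)
  have h2 : Real.exp u - (1 + u) ≤ |u| ^ 2 * (3 / (2 * 2)) := by
    have := (abs_sub_le_iff.1 h).1
    simpa [Finset.sum_range_succ] using this
  have h3 : |u| ^ 2 = u ^ 2 := sq_abs u
  nlinarith [sq_nonneg u]

lemma factor_bound {p u : ℝ} (hp0 : 0 ≤ p) (hp1 : p ≤ 1) (hu : |u| ≤ 1) :
    1 - p + p * Real.exp u ≤ Real.exp (p * u + u ^ 2) := by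
  have h1 : 1 - p + p * Real.exp u ≤ 1 + p * (u + u ^ 2) := by
    nlinarith [exp_le_quad hu]
  have h2 : 1 + p * (u + u ^ 2) ≤ Real.exp (p * (u + u ^ 2)) := by
    linarith [Real.add_one_le_exp (p * (u + u ^ 2))]
  refine h1.trans (h2.trans (Real.exp_le_exp.mpr ?_))
  nlinarith [sq_nonneg u]

lemma binom_step_up (ℓ s k : ℕ) (hs : s ≤ ℓ) (hk : k + 1 ≤ s) :
    ℓ.choose k * s ^ k * (ℓ - s) ^ (ℓ - k) ≤
      ℓ.choose (k+1) * s ^ (k+1) * (ℓ - s) ^ (ℓ - (k+1)) := by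
  have hkl : k < ℓ := by omega
  have e1 : ℓ - k = (ℓ - (k+1)) + 1 := by omega
  have key : (ℓ - s) * (k+1) ≤ (ℓ - k) * s :=
    Nat.mul_le_mul (by omega) hk
  refine Nat.le_of_mul_le_mul_right ?_ (Nat.succ_pos k)
  calc ℓ.choose k * s ^ k * (ℓ - s) ^ (ℓ - k) * (k+1)
      = (ℓ.choose k * (s ^ k * (ℓ - s) ^ (ℓ - (k+1)))) * ((ℓ - s) * (k+1)) := by
        rw [e1, pow_succ]; ring
    _ ≤ (ℓ.choose k * (s ^ k * (ℓ - s) ^ (ℓ - (k+1)))) * ((ℓ - k) * s) :=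
        Nat.mul_le_mul_left _ key
    _ = (ℓ.choose k * (ℓ - k)) * (s ^ (k+1) * (ℓ - s) ^ (ℓ - (k+1))) := by
        rw [pow_succ]; ring
    _ = (ℓ.choose (k+1) * (k+1)) * (s ^ (k+1) * (ℓ - s) ^ (ℓ - (k+1))) := by
        rw [Nat.choose_succ_right_eq]
    _ = ℓ.choose (k+1) * s ^ (k+1) * (ℓ - s) ^ (ℓ - (k+1)) * (k+1) := by ring

lemma binom_step_down (ℓ s k : ℕ) (hsk : s ≤ k) (hk : k < ℓ) :
    ℓ.choose (k+1) * s ^ (k+1) * (ℓ - s) ^ (ℓ - (k+1)) ≤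
      ℓ.choose k * s ^ k * (ℓ - s) ^ (ℓ - k) := by
  have e1 : ℓ - k = (ℓ - (k+1)) + 1 := by omega
  have key : (ℓ - k) * s ≤ (ℓ - s) * (k+1) :=
    Nat.mul_le_mul (by omega) (by omega)
  refine Nat.le_of_mul_le_mul_right ?_ (Nat.succ_pos k)
  calc ℓ.choose (k+1) * s ^ (k+1) * (ℓ - s) ^ (ℓ - (k+1)) * (k+1)
      = (ℓ.choose (k+1) * (k+1)) * (s ^ (k+1) * (ℓ - s) ^ (ℓ - (k+1))) := by ring
    _ = (ℓ.choose k * (ℓ - k)) * (s ^ (k+1) * (ℓ - s) ^ (ℓ - (k+1))) := by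
        rw [Nat.choose_succ_right_eq]
    _ = (ℓ.choose k * (s ^ k * (ℓ - s) ^ (ℓ - (k+1)))) * ((ℓ - k) * s) := by
        rw [pow_succ]; ring
    _ ≤ (ℓ.choose k * (s ^ k * (ℓ - s) ^ (ℓ - (k+1)))) * ((ℓ - s) * (k+1)) :=
        Nat.mul_le_mul_left _ key
    _ = ℓ.choose k * s ^ k * (ℓ - s) ^ (ℓ - k) * (k+1) := by
        rw [e1, pow_succ]; ring

lemma binom_mode (ℓ s : ℕ) (hs : s ≤ ℓ) :
    ∀ k, k ≤ ℓ → ℓ.choose k * s ^ k * (ℓ - s) ^ (ℓ - k) ≤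
      ℓ.choose s * s ^ s * (ℓ - s) ^ (ℓ - s) := by
  have up : ∀ d, d ≤ s → ℓ.choose (s - d) * s ^ (s - d) * (ℓ - s) ^ (ℓ - (s - d)) ≤
      ℓ.choose s * s ^ s * (ℓ - s) ^ (ℓ - s) := by
    intro d hd
    induction d with
    | zero => simp
    | succ d ih =>
      have h1 : s - (d+1) + 1 = s - d := by omega
      have := binom_step_up ℓ s (s - (d+1)) hs (by omega)
      rw [h1] at this
      exact this.trans (ih (by omega))
  have down : ∀ k, s ≤ k → k ≤ ℓ → ℓ.choose k * s ^ k * (ℓ - s) ^ (ℓ - k) ≤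
      ℓ.choose s * s ^ s * (ℓ - s) ^ (ℓ - s) := by
    intro k hk hkl
    induction k, hk using Nat.le_induction with
    | base => exact le_rfl
    | succ k hk ih =>
      exact (binom_step_down ℓ s k hk (by omega)).trans (ih (by omega))
  intro k hk
  rcases le_or_gt k s with h | h
  · have := up (s - k) (by omega)
    rwa [Nat.sub_sub_self h] at this
  · exact down k h.le hk

lemma binom_lb (ℓ s : ℕ) (hs : s ≤ ℓ) :
    ℓ ^ ℓ ≤ (ℓ + 1) * (ℓ.choose s * s ^ s * (ℓ - s) ^ (ℓ - s)) := by
  have hsum : ∑ k ∈ Finset.range (ℓ + 1), s ^ k * (ℓ - s) ^ (ℓ - k) * ℓ.choose k = ℓ ^ ℓ := by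
    have := add_pow (R := ℕ) s (ℓ - s) ℓ  -- hope this gives the sum
    rw [Nat.add_sub_cancel' hs] at this
    exact this.symm
  calc ℓ ^ ℓ = ∑ k ∈ Finset.range (ℓ + 1), s ^ k * (ℓ - s) ^ (ℓ - k) * ℓ.choose k := hsum.symm
    _ ≤ ∑ _k ∈ Finset.range (ℓ + 1), ℓ.choose s * s ^ s * (ℓ - s) ^ (ℓ - s) := by
        refine Finset.sum_le_sum fun k hk => ?_
        have := binom_mode ℓ s hs k (by simpa using Nat.lt_succ_iff.mp (Finset.mem_range.mp hk))
        calc s ^ k * (ℓ - s) ^ (ℓ - k) * ℓ.choose k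
            = ℓ.choose k * s ^ k * (ℓ - s) ^ (ℓ - k) := by ring
          _ ≤ _ := this
    _ = (ℓ + 1) * (ℓ.choose s * s ^ s * (ℓ - s) ^ (ℓ - s)) := by
        rw [Finset.sum_const, Finset.card_range]; ring

lemma binom_lb_real (ℓ s : ℕ) (hs : s ≤ ℓ) (hl : 0 < ℓ) :
    (1 : ℝ) ≤ ((ℓ : ℝ) + 1) * (ℓ.choose s : ℝ) * ((s : ℝ) / ℓ) ^ s *
      (((ℓ : ℝ) - s) / ℓ) ^ (ℓ - s) := by
  have hln : (0 : ℝ) < (ℓ : ℝ) := by exact_mod_cast hl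
  have hcast : ((ℓ : ℝ) - s) = ((ℓ - s : ℕ) : ℝ) := by
    rw [Nat.cast_sub hs]
  have h := binom_lb ℓ s hs
  have hR : ((ℓ : ℝ)) ^ ℓ ≤ ((ℓ : ℝ) + 1) * ((ℓ.choose s : ℝ) * (s : ℝ) ^ s *
      ((ℓ : ℝ) - (s : ℝ)) ^ (ℓ - s)) := by
    rw [hcast]
    exact_mod_cast h
  have hpow : ((ℓ : ℝ)) ^ s * ((ℓ : ℝ)) ^ (ℓ - s) = ((ℓ : ℝ)) ^ ℓ := by
    rw [← pow_add, Nat.add_sub_cancel' hs]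
  rw [div_pow, div_pow]
  rw [show ((ℓ : ℝ) + 1) * (ℓ.choose s : ℝ) * ((s : ℝ) ^ s / (ℓ : ℝ) ^ s) *
      (((ℓ : ℝ) - s) ^ (ℓ - s) / (ℓ : ℝ) ^ (ℓ - s)) =
      (((ℓ : ℝ) + 1) * ((ℓ.choose s : ℝ) * (s : ℝ) ^ s * ((ℓ : ℝ) - (s : ℝ)) ^ (ℓ - s))) /
        ((ℓ : ℝ) ^ s * (ℓ : ℝ) ^ (ℓ - s)) by ring]
  rw [hpow, le_div_iff₀ (by positivity), one_mul]
  exact hR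


set_option maxHeartbeats 1000000 in
/-- Let `n ≥ 1`, `w ≥ 2`, `t ≥ 1`, `0 < q < 1`, and
`g = 72 log²(2n/q)`. Let `D` be a multiset of integers from `[1, w]` partitioned into
nonempty multisets `Ds 1, …, Ds ℓ` (`2 ≤ ℓ ≤ 2n`) such that for each
`0 ≤ j ≤ ⌈log w⌉`, at most `t/2^(j-1)` parts have `2^j ≤ max (Ds i) < 2^(j+1)`.
For each `i` let `S i ⊆ S(Ds i)` with `max (S i) ≤ g · max (Ds i)`, and let `D'` be the
union of `s` parts chosen uniformly at random without replacement. Then for every subset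
`Z ⊆ D` (given by its pieces `Zs i ≤ Ds i`) with `σ(Z ∩ Ds i) ∈ S i` for every `i`,
`Pr[|σ(Z ∩ D') − (s/ℓ)σ(Z)| > 2304·√(wt)·log²w·log³(2n/q)] ≤ q/(2n)`. -/
theorem stmt14 (n w t : ℕ) (hn : 1 ≤ n) (hw : 2 ≤ w) (ht : 1 ≤ t)
    (q : ℝ) (hq0 : 0 < q) (hq1 : q < 1)
    (ℓ : ℕ) (hℓ2 : 2 ≤ ℓ) (hℓn : ℓ ≤ 2 * n)
    (Ds : Fin ℓ → Multiset ℕ) (hne : ∀ i, Ds i ≠ 0)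
    (hmem : ∀ i, ∀ x ∈ Ds i, x ∈ Finset.Icc 1 w)
    (hcount : ∀ j : ℕ, j ≤ ⌈Real.logb 2 w⌉₊ →
      (((Finset.univ.filter fun i =>
          2 ^ j ≤ (Ds i).sup ∧ (Ds i).sup < 2 ^ (j + 1)).card : ℕ) : ℝ)
        ≤ (t : ℝ) / (2 : ℝ) ^ ((j : ℝ) - 1))
    (S : Fin ℓ → Set ℕ) (hS : ∀ i, S i ⊆ subsetSums (Ds i))
    (hSmax : ∀ i, ∀ x ∈ S i,
      (x : ℝ) ≤ 72 * (Real.logb 2 (2 * n / q)) ^ 2 * (((Ds i).sup : ℕ) : ℝ))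
    (s : ℕ) (hs : s ≤ ℓ)
    (Zs : Fin ℓ → Multiset ℕ) (hZ : ∀ i, Zs i ≤ Ds i) (hZS : ∀ i, (Zs i).sum ∈ S i) :
    (((Finset.powersetCard s (Finset.univ : Finset (Fin ℓ))).filter fun T =>
        2304 * Real.sqrt (w * t) * (Real.logb 2 w) ^ 2 * (Real.logb 2 (2 * n / q)) ^ 3 <
          |(∑ i ∈ T, ((Zs i).sum : ℝ)) -
            (s / ℓ : ℝ) * ∑ i, ((Zs i).sum : ℝ)|).card : ℝ) /
      ((Finset.powersetCard s (Finset.univ : Finset (Fin ℓ))).card : ℝ)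
      ≤ q / (2 * n) := by
  classical
  set X : ℝ := 2 * n / q with hXdef
  set G : ℝ := Real.logb 2 X with hGdef
  set W : ℝ := Real.logb 2 (w : ℝ) with hWdef
  set x : Fin ℓ → ℝ := fun i => ((Zs i).sum : ℝ) with hxdef
  set P : Finset (Finset (Fin ℓ)) := Finset.powersetCard s (Finset.univ : Finset (Fin ℓ))
    with hPdef
  set p : ℝ := (s : ℝ) / (ℓ : ℝ) with hpdef
  set lam : ℝ := 2304 * Real.sqrt (w * t) * W ^ 2 * G ^ 3 with hlamdef
  set μ : ℝ := ∑ i, x i with hμdef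
  set V : ℝ := ∑ i, (x i) ^ 2 with hVdef
  set M : ℝ := 144 * Real.sqrt ((w : ℝ) * t) * G ^ 2 with hMdef
  clear_value X G W x P p lam μ V M
  -- basic positivity facts
  have hn1 : (1 : ℝ) ≤ (n : ℝ) := by exact_mod_cast hn
  have hw2 : (2 : ℝ) ≤ (w : ℝ) := by exact_mod_cast hw
  have ht1 : (1 : ℝ) ≤ (t : ℝ) := by exact_mod_cast ht
  have hl0 : (0 : ℝ) < (ℓ : ℝ) := by exact_mod_cast (by omega : 0 < ℓ)
  have hl2n : (ℓ : ℝ) ≤ 2 * n := by exact_mod_cast hℓn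
  have hX2n : 2 * (n : ℝ) ≤ X := by
    rw [hXdef, le_div_iff₀ hq0]
    nlinarith
  have hX2 : (2 : ℝ) ≤ X := le_trans (by linarith) hX2n
  have hX0 : (0 : ℝ) < X := by linarith
  have hG1 : (1 : ℝ) ≤ G := by
    rw [hGdef, show (1:ℝ) = Real.logb 2 2 from (Real.logb_self_eq_one (by norm_num)).symm]
    exact (Real.logb_le_logb (by norm_num) (by norm_num) hX0).mpr hX2
  have hW1 : (1 : ℝ) ≤ W := by
    rw [hWdef, show (1:ℝ) = Real.logb 2 2 from (Real.logb_self_eq_one (by norm_num)).symm]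
    exact (Real.logb_le_logb (by norm_num) (by norm_num) (by linarith)).mpr hw2
  have hG0 : (0 : ℝ) < G := by linarith
  have hW0 : (0 : ℝ) ≤ W := by linarith
  have hsqrt0 : (0 : ℝ) < Real.sqrt ((w : ℝ) * t) := by
    apply Real.sqrt_pos.mpr; nlinarith
  have hM0 : (0 : ℝ) < M := by rw [hMdef]; positivity
  -- the sup facts
  have hsup1 : ∀ i, 1 ≤ (Ds i).sup := by
    intro i
    obtain ⟨a, ha⟩ := Multiset.exists_mem_of_ne_zero (hne i)
    exact le_trans (Finset.mem_Icc.mp (hmem i a ha)).1 (Multiset.le_sup ha)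
  have hsupw : ∀ i, (Ds i).sup ≤ w := fun i =>
    Multiset.sup_le.mpr fun b hb => (Finset.mem_Icc.mp (hmem i b hb)).2
  have hJle : ∀ i, Nat.log 2 ((Ds i).sup) ≤ ⌈W⌉₊ := by
    intro i
    have h2j : (2:ℕ) ^ Nat.log 2 ((Ds i).sup) ≤ w :=
      le_trans (Nat.pow_log_le_self 2 (by have := hsup1 i; omega)) (hsupw i)
    have h2jR : ((2:ℝ)) ^ (Nat.log 2 ((Ds i).sup)) ≤ (w : ℝ) := by exact_mod_cast h2j
    have hlogle : ((Nat.log 2 ((Ds i).sup) : ℝ)) ≤ W := by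
      calc ((Nat.log 2 ((Ds i).sup) : ℝ))
          = Real.logb 2 ((2:ℝ) ^ ((Nat.log 2 ((Ds i).sup) : ℝ))) :=
            (Real.logb_rpow (by norm_num) (by norm_num)).symm
        _ ≤ W := by
            rw [Real.rpow_natCast, hWdef]
            exact (Real.logb_le_logb (by norm_num) (by positivity) (by linarith)).mpr h2jR
    exact_mod_cast hlogle.trans (Nat.le_ceil W)
  -- membership of i in its own bucket
  have hbucket : ∀ i, i ∈ Finset.univ.filter (fun i' =>
      2 ^ (Nat.log 2 ((Ds i).sup)) ≤ (Ds i').sup ∧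
        (Ds i').sup < 2 ^ ((Nat.log 2 ((Ds i).sup)) + 1)) := by
    intro i
    simp only [Finset.mem_filter, Finset.mem_univ, true_and]
    exact ⟨Nat.pow_log_le_self 2 (by have := hsup1 i; omega),
      Nat.lt_pow_succ_log_self (by norm_num) _⟩
  have hsup4t : ∀ i, ((Ds i).sup : ℝ) ≤ 4 * t := by
    intro i
    set j := Nat.log 2 ((Ds i).sup) with hjdef
    have hc1 : (1 : ℝ) ≤ (((Finset.univ.filter fun i' =>
        2 ^ j ≤ (Ds i').sup ∧ (Ds i').sup < 2 ^ (j + 1)).card : ℕ) : ℝ) := by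
      exact_mod_cast Finset.card_pos.mpr ⟨i, hbucket i⟩
    have h1 : (1 : ℝ) ≤ (t : ℝ) / (2:ℝ) ^ ((j:ℝ) - 1) := hc1.trans (hcount j (hJle i))
    have h2e : (2:ℝ) ^ ((j:ℝ) - 1) ≤ t :=
      (one_le_div (by positivity)).mp h1
    have h2e' : (2:ℝ) ^ j / 2 ≤ t := by
      rwa [Real.rpow_sub (by norm_num), Real.rpow_one, Real.rpow_natCast] at h2e
    have hsup2j : ((Ds i).sup : ℝ) < 2 * (2:ℝ) ^ j := by
      have h := Nat.lt_pow_succ_log_self (b := 2) (by norm_num) ((Ds i).sup)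
      have h' : ((Ds i).sup : ℝ) < (2:ℝ) ^ (j + 1) := by exact_mod_cast h
      rw [pow_succ] at h'; linarith
    linarith
  have hsupM : ∀ i, ((Ds i).sup : ℝ) ≤ 2 * Real.sqrt ((w:ℝ) * t) := by
    intro i
    have h1 : ((Ds i).sup : ℝ) ≤ (w : ℝ) := by exact_mod_cast hsupw i
    have h2 := hsup4t i
    have h0 : (0:ℝ) ≤ ((Ds i).sup : ℝ) := by positivity
    have hsq := Real.sq_sqrt (show (0:ℝ) ≤ (w:ℝ) * t by positivity)
    nlinarith [hsqrt0.le, mul_le_mul h1 h2 h0 (by linarith : (0:ℝ) ≤ (w:ℝ))]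
  have hx0 : ∀ i, (0:ℝ) ≤ x i := fun i => by rw [hxdef]; positivity
  have hxg : ∀ i, x i ≤ 72 * G ^ 2 * ((Ds i).sup : ℝ) := fun i => by
    simp only [hxdef]; exact hSmax i _ (hZS i)
  have hxM : ∀ i, x i ≤ M := by
    intro i
    calc x i ≤ 72 * G ^ 2 * ((Ds i).sup : ℝ) := hxg i
      _ ≤ 72 * G ^ 2 * (2 * Real.sqrt ((w:ℝ) * t)) := by
          apply mul_le_mul_of_nonneg_left (hsupM i) (by positivity)
      _ = M := by rw [hMdef]; ring
  -- variance bound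
  have h2L : (2:ℝ) ^ (⌈W⌉₊ : ℕ) ≤ 2 * w := by
    have hceil : ((⌈W⌉₊ : ℕ) : ℝ) < W + 1 := Nat.ceil_lt_add_one hW0
    calc (2:ℝ) ^ (⌈W⌉₊ : ℕ) = (2:ℝ) ^ (((⌈W⌉₊ : ℕ) : ℝ)) := (Real.rpow_natCast 2 _).symm
      _ ≤ (2:ℝ) ^ (W + 1) := Real.rpow_le_rpow_of_exponent_le (by norm_num) hceil.le
      _ = (2:ℝ) ^ W * 2 := by rw [Real.rpow_add (by norm_num), Real.rpow_one]
      _ = 2 * w := by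
          rw [hWdef, Real.rpow_logb (by norm_num) (by norm_num) (by linarith)]; ring
  have hV : V ≤ 32 * ((w:ℝ) * t) * (72 * G ^ 2) ^ 2 := by
    have hfib : V = ∑ j ∈ Finset.range (⌈W⌉₊ + 1),
        ∑ i ∈ Finset.univ.filter (fun i => Nat.log 2 ((Ds i).sup) = j), (x i) ^ 2 := by
      rw [hVdef]
      exact (Finset.sum_fiberwise_of_maps_to
        (fun i _ => Finset.mem_range.mpr (Nat.lt_succ_of_le (hJle i))) _).symm
    have hinner : ∀ j ∈ Finset.range (⌈W⌉₊ + 1),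
        ∑ i ∈ Finset.univ.filter (fun i => Nat.log 2 ((Ds i).sup) = j), (x i) ^ 2
          ≤ (8 * t * (72 * G ^ 2) ^ 2) * 2 ^ j := by
      intro j hj
      have hjle : j ≤ ⌈W⌉₊ := Nat.lt_succ_iff.mp (Finset.mem_range.mp hj)
      have hsubfil : Finset.univ.filter (fun i => Nat.log 2 ((Ds i).sup) = j) ⊆
          Finset.univ.filter (fun i' => 2 ^ j ≤ (Ds i').sup ∧ (Ds i').sup < 2 ^ (j+1)) := by
        intro i hi
        have hji : Nat.log 2 ((Ds i).sup) = j := (Finset.mem_filter.mp hi).2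
        simp only [Finset.mem_filter, Finset.mem_univ, true_and]
        rw [← hji]
        exact ⟨Nat.pow_log_le_self 2 (by have := hsup1 i; omega),
          Nat.lt_pow_succ_log_self (by norm_num) _⟩
      have hcard2 : (((Finset.univ.filter
          (fun i => Nat.log 2 ((Ds i).sup) = j)).card : ℕ) : ℝ)
          ≤ (t : ℝ) / (2:ℝ) ^ ((j:ℝ) - 1) :=
        le_trans (by exact_mod_cast Finset.card_le_card hsubfil) (hcount j hjle)
      have hbound : ∀ i ∈ Finset.univ.filter (fun i => Nat.log 2 ((Ds i).sup) = j),
          (x i) ^ 2 ≤ ((72 * G ^ 2) * (2 * (2:ℝ) ^ j)) ^ 2 := by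
        intro i hi
        have hji : Nat.log 2 ((Ds i).sup) = j := (Finset.mem_filter.mp hi).2
        have hsups : ((Ds i).sup : ℝ) < 2 * (2:ℝ) ^ j := by
          have h := Nat.lt_pow_succ_log_self (b := 2) (by norm_num) ((Ds i).sup)
          rw [hji] at h
          have h' : ((Ds i).sup : ℝ) < (2:ℝ) ^ (j + 1) := by exact_mod_cast h
          rw [pow_succ] at h'; linarith
        have hxi : x i ≤ (72 * G ^ 2) * (2 * (2:ℝ) ^ j) := by
          calc x i ≤ 72 * G ^ 2 * ((Ds i).sup : ℝ) := hxg i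
            _ ≤ (72 * G ^ 2) * (2 * (2:ℝ) ^ j) := by
                apply mul_le_mul_of_nonneg_left hsups.le (by positivity)
        exact pow_le_pow_left₀ (hx0 i) hxi 2
      calc ∑ i ∈ Finset.univ.filter (fun i => Nat.log 2 ((Ds i).sup) = j), (x i) ^ 2
          ≤ (Finset.univ.filter (fun i => Nat.log 2 ((Ds i).sup) = j)).card
              • ((72 * G ^ 2) * (2 * (2:ℝ) ^ j)) ^ 2 :=
            Finset.sum_le_card_nsmul _ _ _ hbound
        _ = ((Finset.univ.filter (fun i => Nat.log 2 ((Ds i).sup) = j)).card : ℝ)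
              * ((72 * G ^ 2) * (2 * (2:ℝ) ^ j)) ^ 2 := by
            rw [nsmul_eq_mul]
        _ ≤ ((t : ℝ) / (2:ℝ) ^ ((j:ℝ) - 1)) * ((72 * G ^ 2) * (2 * (2:ℝ) ^ j)) ^ 2 :=
            mul_le_mul_of_nonneg_right hcard2 (by positivity)
        _ = (8 * t * (72 * G ^ 2) ^ 2) * 2 ^ j := by
            rw [Real.rpow_sub (by norm_num), Real.rpow_one, Real.rpow_natCast]
            have h2j : ((2:ℝ) ^ j) ≠ 0 := by positivity
            rw [div_div_eq_mul_div, div_mul_eq_mul_div, div_eq_iff h2j]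
            ring
    calc V = ∑ j ∈ Finset.range (⌈W⌉₊ + 1),
        ∑ i ∈ Finset.univ.filter (fun i => Nat.log 2 ((Ds i).sup) = j), (x i) ^ 2 := hfib
      _ ≤ ∑ j ∈ Finset.range (⌈W⌉₊ + 1), (8 * t * (72 * G ^ 2) ^ 2) * 2 ^ j :=
          Finset.sum_le_sum hinner
      _ = (8 * t * (72 * G ^ 2) ^ 2) * ∑ j ∈ Finset.range (⌈W⌉₊ + 1), (2:ℝ) ^ j := by
          rw [Finset.mul_sum]
      _ = (8 * t * (72 * G ^ 2) ^ 2) * (((2:ℝ) ^ (⌈W⌉₊ + 1) - 1) / (2 - 1)) := by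
          rw [geom_sum_eq (by norm_num : (2:ℝ) ≠ 1)]
      _ ≤ 32 * ((w:ℝ) * t) * (72 * G ^ 2) ^ 2 := by
          have h2 : (2:ℝ) ^ (⌈W⌉₊ + 1) = 2 * (2:ℝ) ^ (⌈W⌉₊ : ℕ) := by rw [pow_succ]; ring
          rw [h2, show (2:ℝ) - 1 = 1 by norm_num, div_one]
          have hc0 : (0:ℝ) ≤ 8 * t * (72 * G ^ 2) ^ 2 := by positivity
          nlinarith [mul_le_mul_of_nonneg_left h2L hc0, hc0]
  -- cardinality of P
  have hPcard : P.card = ℓ.choose s := by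
    rw [hPdef, Finset.card_powersetCard, Finset.card_univ, Fintype.card_fin]
  have hC0 : (0:ℝ) < (P.card : ℝ) := by
    rw [hPcard]; exact_mod_cast Nat.choose_pos hs
  have hp0 : 0 ≤ p := by rw [hpdef]; positivity
  have hp1 : p ≤ 1 := by
    rw [hpdef, div_le_one hl0]; exact_mod_cast hs
  -- MGF bound
  have mgf : ∀ θ : ℝ, (∀ i, |θ * x i| ≤ 1) →
      ∑ T ∈ P, Real.exp (θ * ∑ i ∈ T, x i) ≤
        ((ℓ:ℝ) + 1) * (P.card : ℝ) * Real.exp (θ * (p * μ) + θ ^ 2 * V) := by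
    intro θ hθ
    have hy0 : ∀ i : Fin ℓ, (0:ℝ) ≤ Real.exp (θ * x i) := fun i => (Real.exp_pos _).le
    have hrw : ∀ T ∈ P, Real.exp (θ * ∑ i ∈ T, x i) = ∏ i ∈ T, Real.exp (θ * x i) := by
      intro T _
      rw [Finset.mul_sum, Real.exp_sum]
    have hterm : ∀ T ∈ P, (p ^ s * (1 - p) ^ (ℓ - s)) * ∏ i ∈ T, Real.exp (θ * x i)
        = (∏ i ∈ T, (p * Real.exp (θ * x i))) * ∏ i ∈ Finset.univ \ T, (1 - p) := by
      intro T hT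
      rw [hPdef] at hT
      have hcardT : T.card = s := (Finset.mem_powersetCard.mp hT).2
      have hdiff : (Finset.univ \ T).card = ℓ - s := by
        rw [Finset.card_sdiff_of_subset (Finset.subset_univ T), hcardT, Finset.card_univ,
          Fintype.card_fin]
      rw [Finset.prod_const, hdiff, Finset.prod_mul_distrib, Finset.prod_const, hcardT]
      ring
    have key : (p ^ s * (1 - p) ^ (ℓ - s)) * ∑ T ∈ P, ∏ i ∈ T, Real.exp (θ * x i)
        ≤ ∏ i, (p * Real.exp (θ * x i) + (1 - p)) := by
      rw [Finset.prod_add, Finset.mul_sum]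
      calc ∑ T ∈ P, (p ^ s * (1 - p) ^ (ℓ - s)) * ∏ i ∈ T, Real.exp (θ * x i)
          = ∑ T ∈ P, (∏ i ∈ T, (p * Real.exp (θ * x i))) *
              ∏ i ∈ Finset.univ \ T, (1 - p) := Finset.sum_congr rfl hterm
        _ ≤ ∑ T ∈ (Finset.univ : Finset (Fin ℓ)).powerset,
              (∏ i ∈ T, (p * Real.exp (θ * x i))) * ∏ i ∈ Finset.univ \ T, (1 - p) := by
            apply Finset.sum_le_sum_of_subset_of_nonneg
            · rw [hPdef, Finset.powersetCard_eq_filter]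
              exact Finset.filter_subset _ _
            · intro T _ _
              apply mul_nonneg
              · exact Finset.prod_nonneg fun i _ => mul_nonneg hp0 (hy0 i)
              · exact Finset.prod_nonneg fun i _ => by linarith
    have prodle : ∏ i, (p * Real.exp (θ * x i) + (1 - p)) ≤
        Real.exp (θ * (p * μ) + θ ^ 2 * V) := by
      calc ∏ i, (p * Real.exp (θ * x i) + (1 - p))
          ≤ ∏ i, Real.exp (p * (θ * x i) + (θ * x i) ^ 2) := by
            apply Finset.prod_le_prod
            · intro i _
              have := hy0 i
              nlinarith
            · intro i _
              have h := factor_bound hp0 hp1 (hθ i)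
              linarith
        _ = Real.exp (∑ i, (p * (θ * x i) + (θ * x i) ^ 2)) := (Real.exp_sum _ _).symm
        _ = Real.exp (θ * (p * μ) + θ ^ 2 * V) := by
            congr 1
            have he : ∀ i : Fin ℓ, p * (θ * x i) + (θ * x i) ^ 2 =
                (p * θ) * x i + θ ^ 2 * (x i) ^ 2 := fun i => by ring
            rw [Finset.sum_congr rfl (fun i _ => he i), Finset.sum_add_distrib,
              ← Finset.mul_sum, ← Finset.mul_sum, hμdef, hVdef]
            ring
    have hbin : (1:ℝ) ≤ ((ℓ:ℝ) + 1) * (P.card : ℝ) * (p ^ s * (1 - p) ^ (ℓ - s)) := by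
      have hb := binom_lb_real ℓ s hs (by omega)
      have h1p : 1 - p = ((ℓ:ℝ) - s) / ℓ := by
        rw [hpdef]
        field_simp
      rw [hPcard, h1p, hpdef]
      calc (1:ℝ) ≤ ((ℓ:ℝ) + 1) * (ℓ.choose s : ℝ) * ((s : ℝ) / ℓ) ^ s *
          (((ℓ:ℝ) - s) / ℓ) ^ (ℓ - s) := hb
        _ = ((ℓ:ℝ) + 1) * (ℓ.choose s : ℝ) *
            (((s:ℝ) / ℓ) ^ s * (((ℓ:ℝ) - s) / ℓ) ^ (ℓ - s)) := by ring
    have hsum0 : (0:ℝ) ≤ ∑ T ∈ P, ∏ i ∈ T, Real.exp (θ * x i) :=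
      Finset.sum_nonneg fun T _ => Finset.prod_nonneg fun i _ => hy0 i
    calc ∑ T ∈ P, Real.exp (θ * ∑ i ∈ T, x i)
        = ∑ T ∈ P, ∏ i ∈ T, Real.exp (θ * x i) := Finset.sum_congr rfl hrw
      _ ≤ (((ℓ:ℝ) + 1) * (P.card : ℝ) * (p ^ s * (1 - p) ^ (ℓ - s))) *
            ∑ T ∈ P, ∏ i ∈ T, Real.exp (θ * x i) := by
          nth_rewrite 1 [← one_mul (∑ T ∈ P, ∏ i ∈ T, Real.exp (θ * x i))]
          exact mul_le_mul_of_nonneg_right hbin hsum0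
      _ = (((ℓ:ℝ) + 1) * (P.card : ℝ)) * ((p ^ s * (1 - p) ^ (ℓ - s)) *
            ∑ T ∈ P, ∏ i ∈ T, Real.exp (θ * x i)) := by ring
      _ ≤ (((ℓ:ℝ) + 1) * (P.card : ℝ)) * ∏ i, (p * Real.exp (θ * x i) + (1 - p)) := by
          apply mul_le_mul_of_nonneg_left key (by positivity)
      _ ≤ (((ℓ:ℝ) + 1) * (P.card : ℝ)) * Real.exp (θ * (p * μ) + θ ^ 2 * V) := by
          apply mul_le_mul_of_nonneg_left prodle (by positivity)
  -- tail bound via Markov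
  have tail : ∀ (f : Finset (Fin ℓ) → ℝ) (c : ℝ),
      (((P.filter fun T => c < f T).card : ℕ) : ℝ) ≤
        Real.exp (-c) * ∑ T ∈ P, Real.exp (f T) := by
    intro f c
    calc (((P.filter fun T => c < f T).card : ℕ) : ℝ)
        = ∑ _T ∈ P.filter fun T => c < f T, (1:ℝ) := by simp
      _ ≤ ∑ T ∈ P.filter fun T => c < f T, Real.exp (f T - c) := by
          apply Finset.sum_le_sum
          intro T hT
          have h1 : c < f T := (Finset.mem_filter.mp hT).2
          have h2 : (0:ℝ) ≤ f T - c := by linarith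
          calc (1:ℝ) = Real.exp 0 := Real.exp_zero.symm
            _ ≤ Real.exp (f T - c) := Real.exp_le_exp.mpr h2
      _ ≤ ∑ T ∈ P, Real.exp (f T - c) :=
          Finset.sum_le_sum_of_subset_of_nonneg (Finset.filter_subset _ _)
            (fun T _ _ => (Real.exp_pos _).le)
      _ = Real.exp (-c) * ∑ T ∈ P, Real.exp (f T) := by
          rw [Finset.mul_sum]
          apply Finset.sum_congr rfl
          intro T _
          rw [← Real.exp_add]
          ring_nf
  -- choose θ
  set θ : ℝ := 1 / M with hθdef
  clear_value θ
  have hθ0 : 0 < θ := by rw [hθdef]; positivity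
  have hθx : ∀ i, |θ * x i| ≤ 1 := by
    intro i
    rw [abs_of_nonneg (mul_nonneg hθ0.le (hx0 i)), hθdef]
    rw [div_mul_eq_mul_div, one_mul, div_le_one hM0]
    exact hxM i
  have hθxneg : ∀ i, |(-θ) * x i| ≤ 1 := by
    intro i
    rw [show (-θ) * x i = -(θ * x i) by ring, abs_neg]
    exact hθx i
  -- exponent computation
  have hexps : θ ^ 2 * V - θ * lam ≤ -(8 * G) := by
    have hM2 : M ^ 2 = 20736 * ((w:ℝ) * t) * G ^ 4 := by
      rw [hMdef]
      have := Real.sq_sqrt (show (0:ℝ) ≤ (w:ℝ) * t by positivity)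
      nlinarith [this]
    have hθ2V : θ ^ 2 * V ≤ 8 := by
      rw [hθdef, div_pow, one_pow]
      rw [div_mul_eq_mul_div, one_mul, div_le_iff₀ (by positivity)]
      calc V ≤ 32 * ((w:ℝ) * t) * (72 * G ^ 2) ^ 2 := hV
        _ = 8 * M ^ 2 := by rw [hM2]; ring
    have hθlam : θ * lam = 16 * W ^ 2 * G := by
      have hlM : lam = 16 * W ^ 2 * G * M := by rw [hlamdef, hMdef]; ring
      rw [hθdef, hlM]
      field_simp [hM0.ne']
    have hW2 : (1:ℝ) ≤ W ^ 2 := by nlinarith [hW1]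
    have hWG := mul_le_mul_of_nonneg_right hW2 hG0.le
    rw [hθlam]
    linarith only [hθ2V, hG1, hWG]
  -- the two tails
  have hup : (((P.filter fun T => p * μ + lam < ∑ i ∈ T, x i).card : ℕ) : ℝ) ≤
      ((ℓ:ℝ) + 1) * (P.card : ℝ) * Real.exp (θ ^ 2 * V - θ * lam) := by
    have hsubset : (P.filter fun T => p * μ + lam < ∑ i ∈ T, x i) ⊆
        (P.filter fun T => θ * (p * μ + lam) < θ * ∑ i ∈ T, x i) := by
      intro T hT
      rw [Finset.mem_filter] at *
      exact ⟨hT.1, (mul_lt_mul_iff_right₀ hθ0).mpr hT.2⟩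
    calc (((P.filter fun T => p * μ + lam < ∑ i ∈ T, x i).card : ℕ) : ℝ)
        ≤ (((P.filter fun T => θ * (p * μ + lam) < θ * ∑ i ∈ T, x i).card : ℕ) : ℝ) := by
          exact_mod_cast Finset.card_le_card hsubset
      _ ≤ Real.exp (-(θ * (p * μ + lam))) * ∑ T ∈ P, Real.exp (θ * ∑ i ∈ T, x i) :=
          tail _ _
      _ ≤ Real.exp (-(θ * (p * μ + lam))) *
            (((ℓ:ℝ) + 1) * (P.card : ℝ) * Real.exp (θ * (p * μ) + θ ^ 2 * V)) :=
          mul_le_mul_of_nonneg_left (mgf θ hθx) (Real.exp_pos _).le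
      _ = ((ℓ:ℝ) + 1) * (P.card : ℝ) * Real.exp (θ ^ 2 * V - θ * lam) := by
          rw [mul_comm (Real.exp _), mul_assoc, ← Real.exp_add]
          congr 2
          ring
  have hlow : (((P.filter fun T => ∑ i ∈ T, x i < p * μ - lam).card : ℕ) : ℝ) ≤
      ((ℓ:ℝ) + 1) * (P.card : ℝ) * Real.exp (θ ^ 2 * V - θ * lam) := by
    have hsubset : (P.filter fun T => ∑ i ∈ T, x i < p * μ - lam) ⊆
        (P.filter fun T => (-θ) * (p * μ - lam) < (-θ) * ∑ i ∈ T, x i) := by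
      intro T hT
      rw [Finset.mem_filter] at *
      refine ⟨hT.1, ?_⟩
      linarith only [mul_pos hθ0 (sub_pos.mpr hT.2)]
    calc (((P.filter fun T => ∑ i ∈ T, x i < p * μ - lam).card : ℕ) : ℝ)
        ≤ (((P.filter fun T => (-θ) * (p * μ - lam) < (-θ) * ∑ i ∈ T, x i).card : ℕ) : ℝ) := by
          exact_mod_cast Finset.card_le_card hsubset
      _ ≤ Real.exp (-((-θ) * (p * μ - lam))) * ∑ T ∈ P, Real.exp ((-θ) * ∑ i ∈ T, x i) :=
          tail _ _
      _ ≤ Real.exp (-((-θ) * (p * μ - lam))) *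
            (((ℓ:ℝ) + 1) * (P.card : ℝ) * Real.exp ((-θ) * (p * μ) + (-θ) ^ 2 * V)) :=
          mul_le_mul_of_nonneg_left (mgf (-θ) hθxneg) (Real.exp_pos _).le
      _ = ((ℓ:ℝ) + 1) * (P.card : ℝ) * Real.exp (θ ^ 2 * V - θ * lam) := by
          rw [mul_comm (Real.exp _), mul_assoc, ← Real.exp_add]
          congr 2
          ring
  -- splitting the two-sided event
  have hsplit : ((P.filter fun T => lam < |(∑ i ∈ T, x i) - p * μ|).card : ℕ) ≤
      (P.filter fun T => p * μ + lam < ∑ i ∈ T, x i).card +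
        (P.filter fun T => ∑ i ∈ T, x i < p * μ - lam).card := by
    refine le_trans (Finset.card_le_card ?_) (Finset.card_union_le _ _)
    intro T hT
    have h1 := (Finset.mem_filter.mp hT).1
    have h2 := (Finset.mem_filter.mp hT).2
    rw [Finset.mem_union, Finset.mem_filter, Finset.mem_filter]
    rcases lt_abs.mp h2 with h | h
    · left; exact ⟨h1, by linarith⟩
    · right; exact ⟨h1, by linarith⟩
  -- final numeric bound
  have hfinal : 2 * ((ℓ:ℝ) + 1) * Real.exp (-(8 * G)) ≤ q / (2 * n) := by
    have hlog2 : Real.log 2 ≤ 1 := by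
      linarith [Real.log_two_lt_d9]
    have hlogX0 : 0 ≤ Real.log X := Real.log_nonneg (by linarith)
    have hGlog : Real.log X ≤ G := by
      rw [hGdef, Real.logb, le_div_iff₀ (Real.log_pos (by norm_num))]
      nlinarith only [Real.log_pos (show (1:ℝ) < 2 by norm_num), hlog2, hlogX0]
    have hexpX : X ^ 4 ≤ Real.exp (8 * G) := by
      have h4 : X ^ 4 = Real.exp (4 * Real.log X) := by
        rw [show (4:ℝ) * Real.log X = Real.log (X ^ 4) by
          rw [Real.log_pow]; norm_num]
        rw [Real.exp_log (by positivity)]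
      rw [h4]
      apply Real.exp_le_exp.mpr
      linarith only [hGlog, hlogX0, hG1]
    have hq2n : q / (2 * (n:ℝ)) = 1 / X := by
      rw [hXdef]
      field_simp
    have hX3 : 2 * ((ℓ:ℝ) + 1) ≤ X ^ 3 := by
      nlinarith only [hX2n, hX2, hn1, hl2n, sq_nonneg X]
    have hexpinv : Real.exp (-(8 * G)) ≤ (X ^ 4)⁻¹ := by
      rw [Real.exp_neg]
      apply inv_anti₀ (by positivity) hexpX
    rw [hq2n]
    calc 2 * ((ℓ:ℝ) + 1) * Real.exp (-(8 * G)) ≤ X ^ 3 * (X ^ 4)⁻¹ := by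
          apply mul_le_mul hX3 hexpinv (Real.exp_pos _).le (by positivity)
      _ = 1 / X := by
          rw [eq_div_iff (ne_of_gt hX0)]
          field_simp
    -- done
  -- assemble
  rw [div_le_iff₀ hC0]
  have hcast : (((P.filter fun T => lam < |(∑ i ∈ T, x i) - p * μ|).card : ℕ) : ℝ) ≤
      (((P.filter fun T => p * μ + lam < ∑ i ∈ T, x i).card : ℕ) : ℝ) +
        (((P.filter fun T => ∑ i ∈ T, x i < p * μ - lam).card : ℕ) : ℝ) := by
    exact_mod_cast hsplit
  calc (((P.filter fun T => lam < |(∑ i ∈ T, x i) - p * μ|).card : ℕ) : ℝ)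
      ≤ (((P.filter fun T => p * μ + lam < ∑ i ∈ T, x i).card : ℕ) : ℝ) +
          (((P.filter fun T => ∑ i ∈ T, x i < p * μ - lam).card : ℕ) : ℝ) := hcast
    _ ≤ 2 * (((ℓ:ℝ) + 1) * (P.card : ℝ) * Real.exp (θ ^ 2 * V - θ * lam)) := by
        linarith only [hup, hlow]
    _ ≤ 2 * (((ℓ:ℝ) + 1) * (P.card : ℝ) * Real.exp (-(8 * G))) := by
        have hee := Real.exp_le_exp.mpr hexps
        have h1 : (0:ℝ) ≤ ((ℓ:ℝ) + 1) * (P.card : ℝ) := by positivity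
        have h2 := mul_le_mul_of_nonneg_left hee h1
        linarith only [h2]
    _ = (2 * ((ℓ:ℝ) + 1) * Real.exp (-(8 * G))) * (P.card : ℝ) := by ring
    _ ≤ q / (2 * n) * (P.card : ℝ) :=
        mul_le_mul_of_nonneg_right hfinal hC0.le
end
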